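/- arXiv:1105.1455 — 5 statements merged into one kernel-verified Lean document; each statement's English description precedes it below -/
import Mathlib

section
/- Let G be a finite simple graph, k ≥ 1, and let v be a vertex of G whose open neighborhood is enumerated as N(v) = {u_1, u_2, …, u_n}. If G \ N•(v) is VD_{k−1}, and for every 1 ≤ i ≤ n the induced subgraph G \ (N•(u_i) ∪ {u_1, u_2, …, u_{i−1}}) is VD_{k−1}, then G is VD_k. -/
/-- The closed neighborhood `N•(v) = N(v) ∪ {v}` of a vertex, as a `Finset`. -/
def SimpleGraph.closedNbhdFinset {V : Type*} [Fintype V] [DecidableEq V] (G : SimpleGraph V)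
    [DecidableRel G.Adj] (v : V) : Finset V :=
  insert v (G.neighborFinset v)

/-- `VD G s k` means that the induced subgraph of `G` on the vertex set `s` has the
graph property `VD_k`: every (induced sub)graph is `VD_0`; a graph with exactly `k`
vertices and no edges is `VD_k`; and if there is a vertex `v` such that deleting `v`
yields a `VD_k` graph and deleting the closed neighborhood of `v` yields a `VD_{k-1}`
graph, then the graph is `VD_k`. -/
inductive SimpleGraph.VD {V : Type*} [Fintype V] [DecidableEq V] (G : SimpleGraph V)
    [DecidableRel G.Adj] : Finset V → ℕ → Prop
  | zero (s : Finset V) : SimpleGraph.VD G s 0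
  | edgeless (s : Finset V) (k : ℕ) (hcard : s.card = k)
      (h : ∀ u ∈ s, ∀ w ∈ s, ¬ G.Adj u w) : SimpleGraph.VD G s k
  | step (s : Finset V) (k : ℕ) (v : V) (hv : v ∈ s)
      (hdel : SimpleGraph.VD G (s.erase v) (k + 1))
      (hnbr : SimpleGraph.VD G (s \ G.closedNbhdFinset v) k) : SimpleGraph.VD G s (k + 1)


lemma SimpleGraph.vd_one {V : Type*} [Fintype V] [DecidableEq V] (G : SimpleGraph V)
    [DecidableRel G.Adj] : ∀ s : Finset V, s.Nonempty → G.VD s 1 := by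
  intro s
  induction s using Finset.strongInduction with
  | _ s ih =>
    rintro ⟨v, hv⟩
    by_cases h : s.card = 1
    · refine .edgeless s 1 h ?_
      intro a ha b hb
      rw [Finset.card_eq_one] at h
      obtain ⟨c, rfl⟩ := h
      simp only [Finset.mem_singleton] at ha hb
      subst ha; subst hb
      exact G.irrefl
    · have hcard : 2 ≤ s.card := by
        have := Finset.card_pos.2 ⟨v, hv⟩
        omega
      refine .step s 0 v hv ?_ (.zero _)
      refine ih (s.erase v) (Finset.erase_ssubset hv) ?_
      rw [← Finset.card_pos, Finset.card_erase_of_mem hv]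
      omega

lemma SimpleGraph.vd_isolated {V : Type*} [Fintype V] [DecidableEq V] (G : SimpleGraph V)
    [DecidableRel G.Adj] {t : Finset V} {m : ℕ} (h : G.VD t m) :
    ∀ s : Finset V, ∀ v : V, v ∈ s → (∀ u ∈ s, ¬ G.Adj v u) → t = s.erase v →
      G.VD s (m + 1) := by
  induction h with
  | zero t =>
    intro s v hv _ _
    exact G.vd_one s ⟨v, hv⟩
  | edgeless t m hcard hedge =>
    intro s v hv hiso ht
    refine .edgeless s (m + 1) ?_ ?_
    · subst ht
      rw [Finset.card_erase_of_mem hv] at hcard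
      have := Finset.card_pos.2 ⟨v, hv⟩
      omega
    · intro a ha b hb
      by_cases hav : a = v
      · subst hav; exact hiso b hb
      · by_cases hbv : b = v
        · subst hbv
          intro hadj; exact hiso a ha hadj.symm
        · exact hedge a (ht ▸ Finset.mem_erase.2 ⟨hav, ha⟩) b
            (ht ▸ Finset.mem_erase.2 ⟨hbv, hb⟩)
  | step t j w hw hdel hnbr ihdel ihnbr =>
    intro s v hv hiso ht
    subst ht
    have hwv : w ≠ v := (Finset.mem_erase.1 hw).1
    have hws : w ∈ s := (Finset.mem_erase.1 hw).2
    refine .step s (j + 1) w hws ?_ ?_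
    · refine ihdel (s.erase w) v (Finset.mem_erase.2 ⟨fun h => hwv h.symm, hv⟩)
        (fun a ha => hiso a (Finset.mem_of_mem_erase ha)) ?_
      exact Finset.erase_right_comm
    · have hvmem : v ∈ s \ G.closedNbhdFinset w := by
        simp only [Finset.mem_sdiff, SimpleGraph.closedNbhdFinset, Finset.mem_insert,
          SimpleGraph.mem_neighborFinset]
        exact ⟨hv, fun h => h.elim (fun h => hwv h.symm) (fun h => hiso w hws h.symm)⟩
      refine ihnbr (s \ G.closedNbhdFinset w) v hvmem
        (fun a ha => hiso a (Finset.mem_sdiff.1 ha).1) ?_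
      ext a
      simp only [Finset.mem_sdiff, Finset.mem_erase]
      tauto

/-- Auxiliary: the vertex set remaining after removing the images of the first `i` indices. -/
def VDaux {V : Type*} [Fintype V] [DecidableEq V] {n : ℕ} (u : Fin n → V) (i : ℕ) : Finset V :=
  Finset.univ \ ((Finset.univ.filter fun t : Fin n => (t : ℕ) < i).image u)

/-- Let `v` be a vertex of `G` whose open neighborhood is enumerated as
`N(v) = {u 0, u 1, …, u (n-1)}`.  If `G \ N•(v)` is `VD_{k-1}` and for every `i` the graph
`G \ (N•(u i) ∪ {u 0, …, u (i-1)})` is `VD_{k-1}`, then `G` is `VD_k`. -/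
theorem vd_of_squid_removals {V : Type*} [Fintype V] [DecidableEq V] (G : SimpleGraph V)
    [DecidableRel G.Adj] (k : ℕ) (hk : 1 ≤ k) (v : V) (n : ℕ) (u : Fin n → V)
    (hinj : Function.Injective u)
    (himg : Finset.univ.image u = G.neighborFinset v)
    (hnbr : G.VD (Finset.univ \ G.closedNbhdFinset v) (k - 1))
    (hu : ∀ i : Fin n,
      G.VD (Finset.univ \ (G.closedNbhdFinset (u i) ∪ (Finset.Iio i).image u)) (k - 1)) :
    G.VD Finset.univ k := by
  obtain ⟨m, rfl⟩ : ∃ m, k = m + 1 := ⟨k - 1, by omega⟩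
  simp only [Nat.add_sub_cancel] at hnbr hu
  have key : ∀ j, j ≤ n → G.VD (VDaux u (n - j)) (m + 1) := by
    intro j
    induction j with
    | zero =>
      intro _
      simp only [Nat.sub_zero]
      have hSeq : VDaux u n = Finset.univ \ G.neighborFinset v := by
        rw [VDaux, ← himg]
        have : (Finset.univ.filter (fun t : Fin n => (t : ℕ) < n)) = Finset.univ := by
          apply Finset.filter_true_of_mem
          intro t _
          exact t.isLt
        rw [this]
      refine G.vd_isolated hnbr (VDaux u n) v ?_ ?_ ?_
      · rw [hSeq]
        simp [SimpleGraph.mem_neighborFinset]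
      · intro w hw hadj
        rw [hSeq] at hw
        simp only [Finset.mem_sdiff, SimpleGraph.mem_neighborFinset] at hw
        exact hw.2 hadj
      · rw [hSeq]
        ext a
        simp only [Finset.mem_sdiff, Finset.mem_erase, SimpleGraph.closedNbhdFinset,
          Finset.mem_insert, SimpleGraph.mem_neighborFinset, Finset.mem_univ, true_and]
        tauto
    | succ j ih =>
      intro hj
      obtain ⟨i, hidef⟩ : ∃ i, n - (j + 1) = i := ⟨_, rfl⟩
      have hi : i < n := by omega
      set w : V := u ⟨i, hi⟩ with hwdef
      have hwmem : w ∈ VDaux u i := by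
        simp only [VDaux, Finset.mem_sdiff, Finset.mem_univ, true_and, Finset.mem_image,
          Finset.mem_filter]
        rintro ⟨t, ht, htw⟩
        have : t = ⟨i, hi⟩ := hinj htw
        subst this
        simp only at ht
        omega
      have herase : (VDaux u i).erase w = VDaux u (i + 1) := by
        ext a
        simp only [VDaux, Finset.mem_erase, Finset.mem_sdiff, Finset.mem_univ, true_and,
          Finset.mem_image, Finset.mem_filter]
        constructor
        · rintro ⟨haw, ha⟩ ⟨t, ht, hta⟩
          rcases Nat.lt_succ_iff_lt_or_eq.1 ht with h | h
          · exact ha ⟨t, h, hta⟩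
          · apply haw
            rw [← hta, hwdef]
            congr 1
            exact Fin.ext h
        · intro ha
          refine ⟨?_, ?_⟩
          · intro haw
            exact ha ⟨⟨i, hi⟩, Nat.lt_succ_self i, haw.symm⟩
          · rintro ⟨t, ht, hta⟩
            exact ha ⟨t, by omega, hta⟩
      have hsdiff : VDaux u i \ G.closedNbhdFinset w =
          Finset.univ \ (G.closedNbhdFinset w ∪ (Finset.Iio (⟨i, hi⟩ : Fin n)).image u) := by
        ext a
        simp only [VDaux, Finset.mem_sdiff, Finset.mem_univ, true_and, Finset.mem_union,
          Finset.mem_image, Finset.mem_filter, Finset.mem_Iio, Fin.lt_def]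
        constructor
        · rintro ⟨hni, hnc⟩ (hc | ⟨t, ht, hta⟩)
          · exact hnc hc
          · exact hni ⟨t, ht, hta⟩
        · intro h
          refine ⟨?_, fun hc => h (Or.inl hc)⟩
          rintro ⟨t, ht, hta⟩
          exact h (Or.inr ⟨t, ht, hta⟩)
      rw [hidef]
      refine .step (VDaux u i) m w hwmem ?_ ?_
      · rw [herase]
        have h1 : i + 1 = n - j := by omega
        rw [h1]
        exact ih (by omega)
      · rw [hsdiff]
        exact hu ⟨i, hi⟩
  have h0 := key n le_rfl
  simp only [Nat.sub_self] at h0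
  have : VDaux u 0 = Finset.univ := by
    rw [VDaux]
    have : (Finset.univ.filter (fun t : Fin n => (t : ℕ) < 0)) = ∅ := by
      apply Finset.filter_false_of_mem
      intro t _
      omega
    rw [this]
    simp
  rwa [this] at h0
end

section
/- Let G be a finite simple graph on n vertices with maximal degree Δ > 0. Then G is VD_{⌊n/(2Δ)⌋}. -/
/-!
Measure a finite vertex set `s` against a vertex `u ∈ s` by `#s + D - deg_s u`, where `D ≥ 1`
bounds all degrees; whenever this exceeds `2 D k`, the set is `VD_{k+1}`. If `u` has a
neighbour `v` in `s`, decompose at `v`: deleting `v` loses one vertex but also lowers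
`deg u`, so the measure does not drop, while deleting `N•(v)` loses at most `D + 1 ≤ 2D`
vertices. If `u` is isolated in `s`, it adds one to the `VD` index of `s \ {u}`, which pays for
the `D` it contributes to the measure. For `s = univ` the measure is at least `n`.
-/

open Finset

namespace SimpleGraph

variable {V : Type*} [Fintype V] {G : SimpleGraph V} [DecidableRel G.Adj]

lemma card_filter_adj_le (s : Finset V) (u : V) : #{w ∈ s | G.Adj u w} ≤ G.degree u := by
  rw [← card_neighborFinset_eq_degree]
  exact card_le_card fun w hw => (G.mem_neighborFinset u w).2 (mem_filter.1 hw).2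

variable [DecidableEq V]

lemma mem_closedNbhdFinset {v w : V} : w ∈ G.closedNbhdFinset v ↔ w = v ∨ G.Adj v w := by
  simp [closedNbhdFinset]

lemma card_closedNbhdFinset_le (v : V) : #(G.closedNbhdFinset v) ≤ G.degree v + 1 :=
  (card_insert_le _ _).trans_eq (by rw [card_neighborFinset_eq_degree])

namespace VD

lemma one_of_nonempty {s : Finset V} (hs : s.Nonempty) : G.VD s 1 := by
  induction hs using Finset.Nonempty.cons_induction with
  | singleton a =>
    refine .edgeless _ _ (card_singleton a) ?_
    simp only [mem_singleton]
    rintro u rfl w rfl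
    exact G.irrefl
  | cons a s ha _ _ =>
    exact .step _ 0 a (mem_cons_self a s) (by rwa [erase_cons]) (.zero _)

lemma insert_isolated {t : Finset V} {k : ℕ} {u : V} (h : G.VD t k) (hut : u ∉ t)
    (hadj : ∀ w ∈ t, ¬ G.Adj u w) : G.VD (insert u t) (k + 1) := by
  induction h with
  | zero t => exact one_of_nonempty (insert_nonempty u t)
  | edgeless t k hcard hedge =>
    refine .edgeless _ _ (by rw [card_insert_of_notMem hut, hcard]) ?_
    simp only [mem_insert]
    rintro x (rfl | hx) y (rfl | hy)
    · exact G.irrefl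
    · exact hadj y hy
    · exact fun hxy => hadj x hx hxy.symm
    · exact hedge x hx y hy
  | step t k v hv _ _ ihdel ihnbr =>
    have huv : u ≠ v := fun huv => hut (huv ▸ hv)
    have hu_nbhd : u ∉ G.closedNbhdFinset v := by
      rw [mem_closedNbhdFinset, not_or]
      exact ⟨huv, fun hvu => hadj v hv hvu.symm⟩
    refine .step _ (k + 1) v (mem_insert_of_mem hv) ?_ ?_
    · rw [erase_insert_of_ne huv]
      exact ihdel (fun hu => hut (mem_of_mem_erase hu))
        (fun w hw => hadj w (mem_of_mem_erase hw))
    · rw [insert_sdiff_of_notMem _ hu_nbhd]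
      exact ihnbr (fun hu => hut (mem_sdiff.1 hu).1) (fun w hw => hadj w (mem_sdiff.1 hw).1)

variable {D : ℕ}

lemma succ_of_degree_lt (hD0 : 0 < D) (hD : ∀ v, G.degree v ≤ D) {s : Finset V} {u : V}
    (hu : u ∈ s) {k : ℕ} (hk : 2 * D * k + #{w ∈ s | G.Adj u w} < #s + D) :
    G.VD s (k + 1) := by
  induction s using Finset.strongInduction generalizing u k with
  | H s ih =>
    obtain _ | j := k
    · exact one_of_nonempty ⟨u, hu⟩
    rw [Nat.mul_succ] at hk
    have of_card_lt : ∀ t ⊂ s, 2 * D * j < #t → G.VD t (j + 1) := fun t hts ht => by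
      obtain ⟨w, hw⟩ := card_pos.1 (by omega : 0 < #t)
      exact ih t hts hw (by have := (card_filter_adj_le t w).trans (hD w); omega)
    by_cases hnbr : ∃ v ∈ s, G.Adj u v
    · obtain ⟨v, hv, huv⟩ := hnbr
      have hdeg_erase : #{w ∈ s.erase v | G.Adj u w} = #{w ∈ s | G.Adj u w} - 1 := by
        rw [filter_erase, card_erase_of_mem (mem_filter.2 ⟨hv, huv⟩)]
      have hdeg_pos : 0 < #{w ∈ s | G.Adj u w} := card_pos.2 ⟨v, mem_filter.2 ⟨hv, huv⟩⟩
      have hcard_erase := card_erase_of_mem hv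
      have hcard_nbhd : #s ≤ #(s \ G.closedNbhdFinset v) + (D + 1) :=
        (card_le_card_sdiff_add_card (t := G.closedNbhdFinset v)).trans
          (by have := (card_closedNbhdFinset_le v).trans (Nat.succ_le_succ (hD v)); omega)
      have hv_nbhd : v ∈ G.closedNbhdFinset v := mem_closedNbhdFinset.2 (.inl rfl)
      refine .step s (j + 1) v hv ?_ ?_
      · exact ih _ (erase_ssubset hv) (mem_erase.2 ⟨G.ne_of_adj huv, hu⟩)
          (by rw [Nat.mul_succ]; omega)
      · exact of_card_lt _ ((ssubset_iff_of_subset sdiff_subset).2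
          ⟨v, hv, fun hv' => (mem_sdiff.1 hv').2 hv_nbhd⟩) (by omega)
    · have hdeg_zero : #{w ∈ s | G.Adj u w} = 0 :=
        card_eq_zero.2 (filter_eq_empty_iff.2 fun w hw huw => hnbr ⟨w, hw, huw⟩)
      have hcard_erase := card_erase_of_mem hu
      rw [← insert_erase hu]
      exact insert_isolated (of_card_lt _ (erase_ssubset hu) (by omega)) (notMem_erase u s)
        (fun w hw huw => hnbr ⟨w, mem_of_mem_erase hw, huw⟩)

lemma succ_of_card_lt (hD0 : 0 < D) (hD : ∀ v, G.degree v ≤ D) {s : Finset V} {k : ℕ}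
    (hk : 2 * D * k < #s) : G.VD s (k + 1) := by
  obtain ⟨u, hu⟩ := card_pos.1 (by omega : 0 < #s)
  exact succ_of_degree_lt hD0 hD hu (by have := (card_filter_adj_le s u).trans (hD u); omega)

end VD

end SimpleGraph

/-- A graph on `n` vertices with maximal degree `Δ > 0` is `VD_{⌊n/(2Δ)⌋}`. -/
theorem vd_of_maxDegree {V : Type*} [Fintype V] [DecidableEq V] (G : SimpleGraph V)
    [DecidableRel G.Adj] (hΔ : 0 < G.maxDegree) :
    G.VD Finset.univ (Fintype.card V / (2 * G.maxDegree)) := by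
  cases hk : Fintype.card V / (2 * G.maxDegree) with
  | zero => exact .zero _
  | succ j =>
    have hle : (j + 1) * (2 * G.maxDegree) ≤ Fintype.card V :=
      (Nat.le_div_iff_mul_le (by omega)).1 hk.ge
    exact SimpleGraph.VD.succ_of_card_lt hΔ G.degree_le_maxDegree
      (by rw [card_univ]; nlinarith)
end

section
/- Let q be a positive integer and G a finite simple graph on m vertices such that q > |N²(v)| + 2|N(v)| for every vertex v of G, where N(v) is the open neighborhood of v and N²(v) is the set of vertices at distance exactly two from v. Then G □ K_q is VD_m. -/
instance boxProdDecidableAdj {V W : Type*} (G : SimpleGraph V) (H : SimpleGraph W)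
    [DecidableRel G.Adj] [DecidableRel H.Adj] [DecidableEq V] [DecidableEq W] :
    DecidableRel (G □ H).Adj := fun x y =>
  decidable_of_iff (G.Adj x.1 y.1 ∧ x.2 = y.2 ∨ H.Adj x.2 y.2 ∧ x.1 = y.1) Iff.rfl

/-- A squid with body `w` in `G □ K_q` is a subset of `V(G) × Fin q` that is either
(i) a subset of `(N°(v) ∪ N°(w)) × {i} ∪ {w} × Fin q` for some vertex `v` adjacent to `w`
and some `i`, or (ii) a subset of `N°(w) × {i, j} ∪ {w} × Fin q` for some `i < j`. -/
def IsSquid {V : Type*} [Fintype V] [DecidableEq V] (G : SimpleGraph V) [DecidableRel G.Adj]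
    (q : ℕ) (w : V) (S : Finset (V × Fin q)) : Prop :=
  (∃ (v : V) (i : Fin q), G.Adj v w ∧
      S ⊆ ((G.neighborFinset v ∪ G.neighborFinset w) ×ˢ {i}) ∪ ({w} ×ˢ Finset.univ)) ∨
  (∃ i j : Fin q, i < j ∧
      S ⊆ (G.neighborFinset w ×ˢ ({i, j} : Finset (Fin q))) ∪ ({w} ×ˢ Finset.univ))

/-- The vertices of `G □ K_q` remaining after deleting the squids in the list `L`. -/
def remaining {V : Type*} [Fintype V] [DecidableEq V] (q : ℕ)
    (L : List (Finset (V × Fin q))) : Finset (V × Fin q) :=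
  Finset.univ \ L.foldr (· ∪ ·) ∅

/-- The open neighborhood of `x` in the induced subgraph `H` of `G □ K_q` on the
vertices remaining after deleting the squids in `L`. -/
def NbhdH {V : Type*} [Fintype V] [DecidableEq V] (G : SimpleGraph V) [DecidableRel G.Adj]
    (q : ℕ) (L : List (Finset (V × Fin q))) (x : V × Fin q) : Finset (V × Fin q) :=
  (remaining q L).filter (fun y => (G □ (⊤ : SimpleGraph (Fin q))).Adj x y)

/-- A DF-algorithm for the graph `G` and `K_q`: a set of DF-tuples (each recorded as the
list of its squids together with the bound `m`) and a map `move` picking a vertex of the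
remaining graph, such that adjoining any squid contained in the neighborhoods described in
(a) or (b) again gives a member of the set. -/
structure DFAlgorithm (V : Type*) [Fintype V] [DecidableEq V] (G : SimpleGraph V)
    [DecidableRel G.Adj] (q : ℕ) where
  tuples : Set (List (Finset (V × Fin q)) × ℕ)
  move : List (Finset (V × Fin q)) × ℕ → V × Fin q
  q_pos : 0 < q
  valid : ∀ T ∈ tuples, T.1.length ≤ T.2 ∧ T.2 ≤ Fintype.card V ∧
    ∀ S ∈ T.1, ∃ w : V, IsSquid G q w S
  move_mem : ∀ T ∈ tuples, T.1.length < T.2 → move T ∈ remaining q T.1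
  extend : ∀ T ∈ tuples, T.1.length < T.2 →
    ∀ S : Finset (V × Fin q), (∃ w : V, IsSquid G q w S) →
    ((∃ j : Fin q, ((move T).1, j) ∈ remaining q T.1 ∧
        S ⊆ NbhdH G q T.1 (move T) ∪ NbhdH G q T.1 ((move T).1, j)) ∨
     (∃ u : V, G.Adj (move T).1 u ∧ (u, (move T).2) ∈ remaining q T.1 ∧
        S ⊆ (NbhdH G q T.1 (move T)).filter (fun y => y.2 = (move T).2) ∪
            NbhdH G q T.1 (u, (move T).2))) →
    (S :: T.1, T.2) ∈ tuples

/-!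
An induced subgraph of `G □ K_W` is given by its columns `R u ⊆ W`; we show it is `VD_k` with `k`
the number of nonempty (live) columns. Shedding the cell `(u, i)` shortens column `u` in the
deletion branch, and in the link branch kills column `u` and removes `i` from the neighbouring
columns.

Fix a proper colouring `c` with `c u ∈ R u`. While some live neighbour `z` of `u` has `c z ∈ R u`,
shed `(u, c z)`; in the link branch, greedily recolour the neighbours of `u` coloured `c z`. The
potential of `u` (the colours seen at `u`, plus twice the dead neighbours, plus the dead vertices at
distance two) never drops, and since it starts at `q > |N²(u)| + 2|N(u)|` every live column stays
longer than its live neighbourhood, which is what the greedy recolouring needs. Once no such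
conflict is left, shedding all cells other than `(u, c u)` ends in an independent set of
representatives, one per live column.
-/

open Finset in
theorem SimpleGraph.colorable_of_forall_degree_lt {V : Type*} [Fintype V] [DecidableEq V]
    {G : SimpleGraph V} [DecidableRel G.Adj] {n : ℕ} (h : ∀ v, G.degree v < n) :
    G.Colorable n := by
  suffices ∀ s : Finset V, ∃ c : V → Fin n, ∀ u ∈ s, ∀ v ∈ s, G.Adj u v → c u ≠ c v by
    obtain ⟨c, hc⟩ := this univ
    exact ⟨Coloring.mk c fun {u v} huv => hc u (mem_univ u) v (mem_univ v) huv⟩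
  intro s
  induction s using Finset.induction_on with
  | empty => exact ⟨fun v => ⟨0, (Nat.zero_le _).trans_lt (h v)⟩, by simp⟩
  | @insert a s ha ih =>
    obtain ⟨c, hc⟩ := ih
    have hfree : #((G.neighborFinset a).image c) < #(univ : Finset (Fin n)) := by
      simpa using card_image_le.trans_lt (h a)
    obtain ⟨j, -, hj⟩ := exists_mem_notMem_of_card_lt_card hfree
    have hj' : ∀ v, G.Adj a v → j ≠ c v := fun v hv hjv =>
      hj (mem_image.2 ⟨v, (G.mem_neighborFinset a v).2 hv, hjv.symm⟩)
    refine ⟨Function.update c a j, ?_⟩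
    simp only [mem_insert]
    rintro u (rfl | hu) v (rfl | hv) huv
    · exact absurd huv (G.loopless.irrefl _)
    · rw [Function.update_self, Function.update_of_ne (ne_of_mem_of_not_mem hv ha)]
      exact hj' v huv
    · rw [Function.update_self, Function.update_of_ne (ne_of_mem_of_not_mem hu ha)]
      exact (hj' u huv.symm).symm
    · rw [Function.update_of_ne (ne_of_mem_of_not_mem hu ha),
        Function.update_of_ne (ne_of_mem_of_not_mem hv ha)]
      exact hc u hu v hv huv

namespace ColumnLists

open Finset SimpleGraph

section Columns

variable {V W : Type*} (G : SimpleGraph V)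

structure IsListColoring (R : V → Finset W) (c : V → W) : Prop where
  mem : ∀ u, (R u).Nonempty → c u ∈ R u
  ne_of_adj : ∀ ⦃u x⦄, G.Adj u x → (R u).Nonempty → (R x).Nonempty → c u ≠ c x

def IsConflictFree (R : V → Finset W) (c : V → W) : Prop :=
  ∀ u x, G.Adj u x → (R x).Nonempty → c x ∉ R u

variable {G}

lemma IsConflictFree.mono {R R' : V → Finset W} {c : V → W} (h : IsConflictFree G R c)
    (hsub : ∀ x, R' x ⊆ R x) : IsConflictFree G R' c :=
  fun u x hux hx hcx => h u x hux (hx.mono (hsub x)) (hsub u hcx)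

variable [Fintype V]

def liveColumns (R : V → Finset W) : Finset V :=
  univ.filter fun u => (R u).Nonempty

@[simp] lemma mem_liveColumns {R : V → Finset W} {u : V} :
    u ∈ liveColumns R ↔ (R u).Nonempty := by
  simp [liveColumns]

variable [Fintype W] [DecidableEq W]

def cells (R : V → Finset W) : Finset (V × W) :=
  univ.filter fun p => p.2 ∈ R p.1

@[simp] lemma mem_cells {R : V → Finset W} {p : V × W} : p ∈ cells R ↔ p.2 ∈ R p.1 := by
  simp [cells]

end Columns

section Erase

variable {V W : Type*} [DecidableEq V] [DecidableEq W]

def eraseCell (R : V → Finset W) (u : V) (i : W) : V → Finset W :=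
  Function.update R u ((R u).erase i)

lemma eraseCell_subset (R : V → Finset W) (u : V) (i : W) (x : V) :
    eraseCell R u i x ⊆ R x := by
  by_cases hx : x = u
  · subst hx; simp [eraseCell, erase_subset]
  · simp [eraseCell, hx]

lemma nonempty_eraseCell_iff {R : V → Finset W} {u : V} {i : W}
    (hu : ((R u).erase i).Nonempty) (x : V) :
    (eraseCell R u i x).Nonempty ↔ (R x).Nonempty := by
  by_cases hx : x = u
  · subst hx; simpa [eraseCell, hu] using hu.mono (erase_subset i _)
  · simp [eraseCell, hx]

lemma isListColoring_eraseCell {G : SimpleGraph V} {R : V → Finset W} {c : V → W} {u : V}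
    {i : W} (hc : IsListColoring G R c) (hi : c u ≠ i) :
    IsListColoring G (eraseCell R u i) c where
  mem x hx := by
    have hcx := hc.mem x (hx.mono (eraseCell_subset R u i x))
    by_cases hxu : x = u
    · subst hxu; simpa [eraseCell] using mem_erase.2 ⟨hi, hcx⟩
    · simpa [eraseCell, hxu] using hcx
  ne_of_adj x y hxy hx hy :=
    hc.ne_of_adj hxy (hx.mono (eraseCell_subset R u i x)) (hy.mono (eraseCell_subset R u i y))

variable [Fintype V]

lemma liveColumns_eraseCell {R : V → Finset W} {u : V} {i : W}
    (hu : ((R u).erase i).Nonempty) : liveColumns (eraseCell R u i) = liveColumns R := by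
  ext x; simp [nonempty_eraseCell_iff hu]

variable [Fintype W]

lemma cells_eraseCell (R : V → Finset W) (u : V) (i : W) :
    cells (eraseCell R u i) = (cells R).erase (u, i) := by
  ext ⟨x, j⟩
  by_cases hx : x = u
  · subst hx; simp [eraseCell]
  · simp [eraseCell, hx]

end Erase

section EraseClosedNbhd

variable {V W : Type*} [DecidableEq V] [DecidableEq W] (G : SimpleGraph V) [DecidableRel G.Adj]

def eraseClosedNbhd (R : V → Finset W) (u : V) (i : W) : V → Finset W :=
  fun x => if x = u then ∅ else if G.Adj u x then (R x).erase i else R x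

variable {G} {R : V → Finset W} {c c' : V → W} {u : V} {i : W}

lemma eraseClosedNbhd_subset (R : V → Finset W) (u : V) (i : W) (x : V) :
    eraseClosedNbhd G R u i x ⊆ R x := by
  unfold eraseClosedNbhd
  split_ifs
  · exact empty_subset _
  · exact erase_subset _ _
  · exact Subset.rfl

lemma nonempty_eraseClosedNbhd_iff
    (hsurv : ∀ x, G.Adj u x → (R x).Nonempty → ((R x).erase i).Nonempty) (x : V) :
    (eraseClosedNbhd G R u i x).Nonempty ↔ x ≠ u ∧ (R x).Nonempty := by
  unfold eraseClosedNbhd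
  by_cases hx : x = u
  · simp [hx]
  · by_cases hux : G.Adj u x
    · simpa [hx, hux] using ⟨fun h => h.mono (erase_subset _ _), hsurv x hux⟩
    · simp [hx, hux]

variable [Fintype V]

lemma liveColumns_eraseClosedNbhd
    (hsurv : ∀ x, G.Adj u x → (R x).Nonempty → ((R x).erase i).Nonempty) :
    liveColumns (eraseClosedNbhd G R u i) = (liveColumns R).erase u := by
  ext x; simp [nonempty_eraseClosedNbhd_iff hsurv]

variable (G) in
def liveNeighbors (R : V → Finset W) (u : V) : Finset V :=
  G.neighborFinset u ∩ liveColumns R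

variable (G) in
/-- The live neighbours of `u` coloured `i` lose that colour when the closed neighbourhood of
`(u, i)` is deleted; `c'` recolours them. -/
def IsRecoloring (R : V → Finset W) (c c' : V → W) (u : V) (i : W) : Prop :=
  (∀ x, ¬(G.Adj u x ∧ c x = i) → c' x = c x) ∧
  ∀ x, G.Adj u x → (R x).Nonempty → c x = i →
    c' x ∈ eraseClosedNbhd G R u i x ∧ c' x ∉ ((liveNeighbors G R x).erase u).image c

lemma isListColoring_eraseClosedNbhd (hc : IsListColoring G R c)
    (hsurv : ∀ x, G.Adj u x → (R x).Nonempty → ((R x).erase i).Nonempty)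
    (hrec : IsRecoloring G R c c' u i) :
    IsListColoring G (eraseClosedNbhd G R u i) c' where
  mem x hx := by
    obtain ⟨hxu, hx⟩ := (nonempty_eraseClosedNbhd_iff hsurv x).1 hx
    by_cases hx' : G.Adj u x ∧ c x = i
    · exact (hrec.2 x hx'.1 hx hx'.2).1
    rw [hrec.1 x hx']
    by_cases hux : G.Adj u x
    · simpa [eraseClosedNbhd, hxu, hux] using mem_erase.2 ⟨fun h => hx' ⟨hux, h⟩, hc.mem x hx⟩
    · simpa [eraseClosedNbhd, hxu, hux] using hc.mem x hx
  ne_of_adj x y hxy hx hy := by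
    obtain ⟨hxu, hx⟩ := (nonempty_eraseClosedNbhd_iff hsurv x).1 hx
    obtain ⟨hyu, hy⟩ := (nonempty_eraseClosedNbhd_iff hsurv y).1 hy
    have hy_mem : y ∈ (liveNeighbors G R x).erase u := by simp [liveNeighbors, hxy, hyu, hy]
    have hx_mem : x ∈ (liveNeighbors G R y).erase u := by
      simp [liveNeighbors, hxy.symm, hxu, hx]
    by_cases hx' : G.Adj u x ∧ c x = i <;> by_cases hy' : G.Adj u y ∧ c y = i
    · exact absurd (hx'.2.trans hy'.2.symm) (hc.ne_of_adj hxy hx hy)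
    · rw [hrec.1 y hy']
      exact fun h => (hrec.2 x hx'.1 hx hx'.2).2 (h ▸ mem_image_of_mem c hy_mem)
    · rw [hrec.1 x hx']
      exact fun h => (hrec.2 y hy'.1 hy hy'.2).2 (h ▸ mem_image_of_mem c hx_mem)
    · rw [hrec.1 x hx', hrec.1 y hy']
      exact hc.ne_of_adj hxy hx hy

variable [Fintype W]

lemma cells_eraseClosedNbhd (R : V → Finset W) (u : V) (i : W) :
    cells (eraseClosedNbhd G R u i) =
      cells R \ (G □ (⊤ : SimpleGraph W)).closedNbhdFinset (u, i) := by
  ext ⟨x, j⟩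
  simp only [mem_cells, eraseClosedNbhd, mem_sdiff, closedNbhdFinset, mem_insert,
    mem_neighborFinset, boxProd_adj, top_adj, Prod.mk.injEq]
  by_cases hx : x = u
  · simp only [hx, if_true, notMem_empty, false_iff]
    tauto
  · by_cases hux : G.Adj u x
    · simp [hx, hux, Ne.symm hx, eq_comm, and_comm]
    · simp [hx, hux, Ne.symm hx]

end EraseClosedNbhd

section Shedding

variable {V W : Type*} [Fintype V] [DecidableEq V] [Fintype W] [DecidableEq W]
  {G : SimpleGraph V} [DecidableRel G.Adj]

variable (G) in
def IsSheddingCell (R : V → Finset W) (u : V) (i : W) : Prop :=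
  i ∈ R u ∧ ((R u).erase i).Nonempty ∧
    ∀ x, G.Adj u x → (R x).Nonempty → ((R x).erase i).Nonempty

lemma vd_cells_of_isSheddingCell {R : V → Finset W} {u : V} {i : W}
    (h : IsSheddingCell G R u i)
    (hdel : (G □ (⊤ : SimpleGraph W)).VD (cells (eraseCell R u i))
      #(liveColumns (eraseCell R u i)))
    (hlink : (G □ (⊤ : SimpleGraph W)).VD (cells (eraseClosedNbhd G R u i))
      #(liveColumns (eraseClosedNbhd G R u i))) :
    (G □ (⊤ : SimpleGraph W)).VD (cells R) #(liveColumns R) := by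
  obtain ⟨hi, hu, hsurv⟩ := h
  have hu_mem : u ∈ liveColumns R := mem_liveColumns.2 ⟨i, hi⟩
  rw [liveColumns_eraseCell hu, cells_eraseCell] at hdel
  rw [liveColumns_eraseClosedNbhd hsurv, cells_eraseClosedNbhd, card_erase_of_mem hu_mem] at hlink
  rw [← Nat.sub_add_cancel (card_pos.2 ⟨u, hu_mem⟩)] at hdel ⊢
  exact VD.step _ _ (u, i) (by simpa using hi) hdel hlink

theorem vd_cells_of_forall_shedding (P : (V → Finset W) → Prop)
    (hP : ∀ R, P R → (G □ (⊤ : SimpleGraph W)).VD (cells R) #(liveColumns R) ∨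
      ∃ u i, IsSheddingCell G R u i ∧ P (eraseCell R u i) ∧ P (eraseClosedNbhd G R u i))
    (R : V → Finset W) (hR : P R) :
    (G □ (⊤ : SimpleGraph W)).VD (cells R) #(liveColumns R) := by
  induction h : #(cells R) using Nat.strong_induction_on generalizing R with
  | _ n ih =>
    rcases hP R hR with hvd | ⟨u, i, hs, hdel, hlink⟩
    · exact hvd
    have hmem : (u, i) ∈ cells R := by simpa using hs.1
    refine vd_cells_of_isSheddingCell hs (ih _ ?_ _ hdel rfl) (ih _ ?_ _ hlink rfl)
    · rw [← h, cells_eraseCell]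
      exact card_erase_lt_of_mem hmem
    · rw [← h, cells_eraseClosedNbhd]
      refine card_lt_card ((ssubset_iff_of_subset sdiff_subset).2 ⟨(u, i), hmem, ?_⟩)
      simp [closedNbhdFinset]

lemma vd_cells_of_forall_eq_singleton {R : V → Finset W} {c : V → W}
    (hsingle : ∀ u, (R u).Nonempty → R u = {c u}) (hfree : IsConflictFree G R c) :
    (G □ (⊤ : SimpleGraph W)).VD (cells R) #(liveColumns R) := by
  have hcells : cells R = (liveColumns R).image fun u => (u, c u) := by
    ext ⟨x, j⟩
    constructor
    · intro hj
      have hx : (R x).Nonempty := ⟨j, by simpa using hj⟩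
      have hjx : j = c x := by simpa [hsingle x hx] using hj
      exact mem_image.2 ⟨x, mem_liveColumns.2 hx, by rw [hjx]⟩
    · simp only [mem_image, mem_liveColumns, Prod.mk.injEq]
      rintro ⟨x, hx, rfl, rfl⟩
      simp [hsingle x hx]
  rw [hcells]
  refine VD.edgeless _ _ (card_image_of_injective _ fun _ _ h => congrArg Prod.fst h) ?_
  simp only [mem_image, mem_liveColumns]
  rintro _ ⟨u, hu, rfl⟩ _ ⟨x, hx, rfl⟩ hadj
  rcases boxProd_adj.1 hadj with ⟨hux, hcux⟩ | ⟨hne, rfl⟩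
  · exact hfree u x hux hx (by simpa [hsingle u hu] using hcux.symm)
  · exact hne.ne rfl

theorem vd_cells_of_isConflictFree {R : V → Finset W} {c : V → W} (hc : IsListColoring G R c)
    (hfree : IsConflictFree G R c) :
    (G □ (⊤ : SimpleGraph W)).VD (cells R) #(liveColumns R) := by
  refine vd_cells_of_forall_shedding (fun R => IsListColoring G R c ∧ IsConflictFree G R c) ?_
    R ⟨hc, hfree⟩
  rintro R ⟨hc, hfree⟩
  by_cases hlong : ∃ u, 1 < #(R u)
  · obtain ⟨u, hu⟩ := hlong
    obtain ⟨i, hi'⟩ := (one_lt_card_iff_nontrivial.1 hu).erase_nonempty (a := c u)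
    obtain ⟨hicu, hi⟩ := mem_erase.1 hi'
    have hcx : ∀ x, G.Adj u x → (R x).Nonempty → c x ≠ i := fun x hux hx hcx =>
      hfree u x hux hx (hcx ▸ hi)
    have hsurv : ∀ x, G.Adj u x → (R x).Nonempty → ((R x).erase i).Nonempty := fun x hux hx =>
      ⟨c x, mem_erase.2 ⟨hcx x hux hx, hc.mem x hx⟩⟩
    have hrec : IsRecoloring G R c c u i :=
      ⟨fun _ _ => rfl, fun x hux hx hcxi => absurd hcxi (hcx x hux hx)⟩
    refine Or.inr ⟨u, i, ⟨hi, ⟨c u, mem_erase.2 ⟨hicu.symm, hc.mem u ⟨i, hi⟩⟩⟩, hsurv⟩,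
      ⟨isListColoring_eraseCell hc hicu.symm, hfree.mono (eraseCell_subset R u i)⟩,
      ⟨isListColoring_eraseClosedNbhd hc hsurv hrec, hfree.mono (eraseClosedNbhd_subset R u i)⟩⟩
  · simp only [not_exists, not_lt] at hlong
    refine Or.inl (vd_cells_of_forall_eq_singleton (fun u hu => ?_) hfree)
    exact eq_singleton_iff_unique_mem.2
      ⟨hc.mem u hu, fun j hj => card_le_one.1 (hlong u) _ hj _ (hc.mem u hu)⟩

end Shedding

section Potential

variable {V W : Type*} [Fintype V] (G : SimpleGraph V)

noncomputable def sphereTwo (u : V) : Finset V :=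
  univ.filter fun x => G.dist u x = 2

variable {G}

lemma ncard_setOf_dist_eq_two (u : V) :
    ({x | G.dist u x = 2} : Set V).ncard = #(sphereTwo G u) := by
  rw [← Set.ncard_coe_finset]; simp [sphereTwo]

lemma mem_sphereTwo {u y : V} (hyu : y ≠ u) (hadj : ¬G.Adj u y)
    (hcommon : (G.commonNeighbors y u).Nonempty) : u ∈ sphereTwo G y := by
  have h : G.edist y u = 2 := edist_eq_two_iff.2 ⟨hyu, fun h => hadj h.symm, hcommon⟩
  simp [sphereTwo, SimpleGraph.dist, h]

variable [DecidableEq V] [DecidableEq W] [DecidableRel G.Adj]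

variable (G) in
noncomputable def potential (R : V → Finset W) (c : V → W) (u : V) : ℕ :=
  #(R u ∪ (liveNeighbors G R u).image c) + 2 * #(G.neighborFinset u \ liveColumns R) +
    #(sphereTwo G u \ liveColumns R)

variable {R : V → Finset W} {c c' : V → W} {u : V} {i : W} {q : ℕ}

lemma card_liveNeighbors_lt
    (hdeg : ({x | G.dist u x = 2} : Set V).ncard + 2 * G.degree u < q)
    (hq : q ≤ potential G R c u) : #(liveNeighbors G R u) < #(R u) := by
  have hunion : #(R u ∪ (liveNeighbors G R u).image c) ≤ #(R u) + #(liveNeighbors G R u) :=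
    (card_union_le _ _).trans (Nat.add_le_add_left card_image_le _)
  have hnbr := card_inter_add_card_sdiff (G.neighborFinset u) (liveColumns R)
  have hsph : #(sphereTwo G u \ liveColumns R) ≤ #(sphereTwo G u) := card_le_card sdiff_subset
  rw [ncard_setOf_dist_eq_two, ← card_neighborFinset_eq_degree] at hdeg
  unfold potential liveNeighbors at *
  omega

lemma potential_eraseCell (hu : ((R u).erase i).Nonempty)
    (hi : i ∈ (liveNeighbors G R u).image c) (y : V) :
    potential G (eraseCell R u i) c y = potential G R c y := by
  simp only [potential, liveNeighbors, liveColumns_eraseCell hu] at hi ⊢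
  by_cases hy : y = u
  · subst hy
    rw [eraseCell, Function.update_self, erase_union_of_mem hi]
  · rw [eraseCell, Function.update_of_ne hy]

lemma erase_nonempty_of_adj (hlong : ∀ x, (R x).Nonempty → #(liveNeighbors G R x) < #(R x))
    (hu : (R u).Nonempty) (i : W) {x : V} (hux : G.Adj u x) (hx : (R x).Nonempty) :
    ((R x).erase i).Nonempty := by
  have hpos : 0 < #(liveNeighbors G R x) :=
    card_pos.2 ⟨u, by simp [liveNeighbors, hux.symm, hu]⟩
  exact (one_lt_card_iff_nontrivial.1 (by linarith [hlong x hx])).erase_nonempty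

lemma exists_isRecoloring (hlong : ∀ x, (R x).Nonempty → #(liveNeighbors G R x) < #(R x))
    (hu : (R u).Nonempty) (hc : IsListColoring G R c) (i : W) :
    ∃ c', IsRecoloring G R c c' u i := by
  have hpick : ∀ x, G.Adj u x → (R x).Nonempty → c x = i → ∃ j, j ∈ eraseClosedNbhd G R u i x ∧
      j ∉ ((liveNeighbors G R x).erase u).image c := by
    intro x hux hx hcx
    have hu_mem : u ∈ liveNeighbors G R x := by simp [liveNeighbors, hux.symm, hu]
    refine exists_mem_notMem_of_card_lt_card (card_image_le.trans_lt ?_)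
    simp only [eraseClosedNbhd, (G.ne_of_adj hux).symm, hux, if_false, if_true]
    rw [card_erase_of_mem hu_mem, card_erase_of_mem (hcx ▸ hc.mem x hx)]
    have := card_pos.2 ⟨u, hu_mem⟩
    have := hlong x hx
    omega
  have : Nonempty W := ⟨i⟩
  choose! f hf using hpick
  refine ⟨fun x => if G.Adj u x ∧ c x = i then f x else c x, fun x hx => if_neg hx,
    fun x hux hx hcx => ?_⟩
  simpa only [if_pos (And.intro hux hcx)] using hf x hux hx hcx

lemma mem_union_eraseClosedNbhd (hrec : IsRecoloring G R c c' u i) {y : V} (hyu : y ≠ u)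
    {r : W} (hr : r ∈ R y ∪ (liveNeighbors G R y).image c) :
    r ∈ eraseClosedNbhd G R u i y ∪ ((liveNeighbors G R y).erase u).image c' ∨
      (G.Adj u y ∧ (r = c u ∨ r = i)) ∨ (r = i ∧ (G.commonNeighbors y u).Nonempty) := by
  rcases mem_union.1 hr with hr | hr
  · by_cases hadj : G.Adj u y
    · by_cases hri : r = i
      · exact Or.inr (Or.inl ⟨hadj, Or.inr hri⟩)
      · exact Or.inl (mem_union_left _ (by simp [eraseClosedNbhd, hyu, hadj, hri, hr]))
    · exact Or.inl (mem_union_left _ (by simp [eraseClosedNbhd, hyu, hadj, hr]))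
  · obtain ⟨x, hx, rfl⟩ := mem_image.1 hr
    obtain ⟨hyx, hx⟩ := mem_inter.1 hx
    rw [mem_neighborFinset] at hyx
    by_cases hxu : x = u
    · subst hxu
      exact Or.inr (Or.inl ⟨hyx.symm, Or.inl rfl⟩)
    by_cases hx' : G.Adj u x ∧ c x = i
    · exact Or.inr (Or.inr ⟨hx'.2, x, (mem_commonNeighbors G).2 ⟨hyx, hx'.1⟩⟩)
    · refine Or.inl (mem_union_right _ (mem_image.2 ⟨x, ?_, hrec.1 x hx'⟩))
      simp [liveNeighbors, hyx, hxu, mem_liveColumns.1 hx]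

/-- The colours `y` loses are paid for by `u` becoming a dead neighbour of `y` (at most `c u` and
`i` lost) or a dead vertex at distance two (at most `i` lost). -/
lemma potential_le_potential_eraseClosedNbhd
    (hsurv : ∀ x, G.Adj u x → (R x).Nonempty → ((R x).erase i).Nonempty)
    (hrec : IsRecoloring G R c c' u i) (hu : (R u).Nonempty) {y : V} (hyu : y ≠ u) :
    potential G R c y ≤ potential G (eraseClosedNbhd G R u i) c' y := by
  have huS : u ∈ liveColumns R := mem_liveColumns.2 hu
  have hmem := fun r hr => mem_union_eraseClosedNbhd hrec hyu (r := r) hr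
  simp only [potential, liveNeighbors, liveColumns_eraseClosedNbhd hsurv, inter_erase] at hmem ⊢
  set A := R y ∪ (G.neighborFinset y ∩ liveColumns R).image c
  set A' := eraseClosedNbhd G R u i y ∪ ((G.neighborFinset y ∩ liveColumns R).erase u).image c'
  have hdead := card_le_card (sdiff_subset_sdiff (Subset.refl (G.neighborFinset y))
    (erase_subset u (liveColumns R)))
  have hsph := card_le_card (sdiff_subset_sdiff (Subset.refl (sphereTwo G y))
    (erase_subset u (liveColumns R)))
  by_cases hadj : G.Adj u y
  · have hA : #A ≤ #A' + 2 := by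
      refine (card_le_card (t := A' ∪ {c u, i}) fun r hr => ?_).trans
        ((card_union_le _ _).trans (Nat.add_le_add_left card_le_two _))
      rcases hmem r hr with h | ⟨-, rfl | rfl⟩ | ⟨rfl, -⟩
      · exact mem_union_left _ h
      all_goals simp
    have hdead' : #(G.neighborFinset y \ (liveColumns R).erase u) =
        #(G.neighborFinset y \ liveColumns R) + 1 := by
      rw [sdiff_erase ((mem_neighborFinset _ _ _).2 hadj.symm),
        card_insert_of_notMem (fun h => (mem_sdiff.1 h).2 huS)]
    omega
  by_cases hcommon : (G.commonNeighbors y u).Nonempty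
  · have hA : #A ≤ #A' + 1 := by
      refine (card_le_card (t := A' ∪ {i}) fun r hr => ?_).trans (card_union_le _ _)
      rcases hmem r hr with h | ⟨h, -⟩ | ⟨rfl, -⟩
      exacts [mem_union_left _ h, absurd h hadj, by simp]
    have hsph' : #(sphereTwo G y \ (liveColumns R).erase u) =
        #(sphereTwo G y \ liveColumns R) + 1 := by
      rw [sdiff_erase (mem_sphereTwo hyu hadj hcommon),
        card_insert_of_notMem (fun h => (mem_sdiff.1 h).2 huS)]
    omega
  · have hA : #A ≤ #A' := card_le_card fun r hr => by
      rcases hmem r hr with h | ⟨h, -⟩ | ⟨-, h⟩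
      exacts [h, absurd h hadj, absurd h hcommon]
    omega

theorem vd_cells_of_potential [Fintype W]
    (hdeg : ∀ v, ({x | G.dist v x = 2} : Set V).ncard + 2 * G.degree v < q)
    (hc : IsListColoring G R c) (hpot : ∀ u, (R u).Nonempty → q ≤ potential G R c u) :
    (G □ (⊤ : SimpleGraph W)).VD (cells R) #(liveColumns R) := by
  refine vd_cells_of_forall_shedding (fun R => ∃ c, IsListColoring G R c ∧
    ∀ u, (R u).Nonempty → q ≤ potential G R c u) ?_ R ⟨c, hc, hpot⟩
  rintro R ⟨c, hc, hpot⟩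
  by_cases hconf : ∃ u z, G.Adj u z ∧ (R z).Nonempty ∧ c z ∈ R u
  · obtain ⟨u, z, huz, hz, hczu⟩ := hconf
    have hu : (R u).Nonempty := ⟨_, hczu⟩
    have hlong := fun x hx => card_liveNeighbors_lt (hdeg x) (hpot x hx)
    have hcu : c u ≠ c z := hc.ne_of_adj huz hu hz
    have hu' : ((R u).erase (c z)).Nonempty := ⟨c u, mem_erase.2 ⟨hcu, hc.mem u hu⟩⟩
    have hsurv := fun x => erase_nonempty_of_adj hlong hu (c z) (x := x)
    have hcz : c z ∈ (liveNeighbors G R u).image c :=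
      mem_image_of_mem c (by simp [liveNeighbors, huz, hz])
    obtain ⟨c', hrec⟩ := exists_isRecoloring hlong hu hc (c z)
    refine Or.inr ⟨u, c z, ⟨hczu, hu', hsurv⟩,
      ⟨c, isListColoring_eraseCell hc hcu, fun y hy => ?_⟩,
      ⟨c', isListColoring_eraseClosedNbhd hc hsurv hrec, fun y hy => ?_⟩⟩
    · rw [potential_eraseCell hu' hcz]
      exact hpot y ((nonempty_eraseCell_iff hu' y).1 hy)
    · obtain ⟨hyu, hy⟩ := (nonempty_eraseClosedNbhd_iff hsurv y).1 hy
      exact (hpot y hy).trans (potential_le_potential_eraseClosedNbhd hsurv hrec hu hyu)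
  · simp only [not_exists, not_and] at hconf
    exact Or.inl (vd_cells_of_isConflictFree hc hconf)

end Potential

end ColumnLists

open ColumnLists in
theorem vd_boxProd_of_degree_bound_general {V : Type*} [Fintype V] [DecidableEq V]
    (G : SimpleGraph V) [DecidableRel G.Adj] (q : ℕ)
    (hdeg : ∀ v : V, ({u : V | G.dist v u = 2} : Set V).ncard + 2 * G.degree v < q) :
    (G □ (⊤ : SimpleGraph (Fin q))).VD Finset.univ (Fintype.card V) := by
  obtain ⟨c⟩ := G.colorable_of_forall_degree_lt (n := q) fun v => by have := hdeg v; omega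
  let R : V → Finset (Fin q) := fun _ => Finset.univ
  have hcells : cells R = Finset.univ := by ext; simp [R]
  have hlive : liveColumns R = Finset.univ := by
    ext v
    simpa [R] using Finset.univ_nonempty_iff.2 ⟨⟨0, by have := hdeg v; omega⟩⟩
  have hvd := vd_cells_of_potential hdeg (R := R) (c := c)
    ⟨fun v _ => Finset.mem_univ _, fun _ _ huv _ _ => c.valid huv⟩
    fun v _ => by simp [R, potential, Finset.union_eq_left.2 (Finset.subset_univ _), add_assoc]
  rwa [hcells, hlive, Finset.card_univ] at hvd

/-- If `G` has `m` vertices and `q > |N²(v)| + 2|N(v)|` for every vertex `v`,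
then `G □ K_q` is `VD_m`. -/
theorem vd_boxProd_of_degree_bound {V : Type*} [Fintype V] [DecidableEq V]
    (G : SimpleGraph V) [DecidableRel G.Adj] (q : ℕ) (hq : 0 < q)
    (hdeg : ∀ v : V, ({u : V | G.dist v u = 2} : Set V).ncard + 2 * G.degree v < q) :
    (G □ (⊤ : SimpleGraph (Fin q))).VD Finset.univ (Fintype.card V) :=
  vd_boxProd_of_degree_bound_general G q hdeg
end

section
/- For every real ε > 0 there exist a constant K > 0 and thresholds N₀, Δ₀ such that for all integers N ≥ N₀ and every finite simple graph G with ⌈N(1+ε)⌉ vertices and maximal degree Δ ≥ Δ₀, and every integer q with q > K·Δ, the graph G □ K_q is VD_N. -/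
/-!
Think of the row `{c | (u, c) ∈ s}` of a vertex `u` of `G` as the list of colours still available
to `u`; independent sets of `G □ K_W` inside `s` are then partial proper list colourings. In the
recursion defining `VD`, deleting `(x, c)` removes `c` from the list of `x`, while deleting its
closed neighbourhood colours `x` by `c`: the row of `x` disappears, `c` leaves the lists of the
neighbours of `x`, and `k` drops by one.

We steer this recursion with a potential. A row may carry a pin (the colour it intends to keep) and
at most `R ≈ 1/ε` tokens. An unpinned row is worth its tokens and may pin a colour by spending a
token; a pinned row is worth `R`, or only its tokens plus one while it is blocked, that is, while
some neighbouring row holds its pin. A blocked row is resolved by branching at the offending vertex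
of that neighbour: either the vertex goes, or the neighbour is coloured and the blocked row
unpinned, so `k` drops by one while the potential drops by at most `R + 1`, and
`(R + 1) k ≤ potential` is preserved. A row is active if it is blocked or unpinned with tokens; the
lists of active rows stay longer than the total weight of their neighbours, each neighbour weighing
one plus its tokens plus one if its pin lies in the list, and this pays for every colour the row can
still lose. Once no row is active, every remaining vertex that is not a pin is deleted, and the pins
left form an independent set of size at least `k`. Initially all rows are unpinned with `R` tokens,
so the potential is `R |V| ≥ (R + 1) N`, and `q > (R + 1) Δ` colours give enough room.
-/

namespace SimpleGraph

variable {α : Type*} [Fintype α] [DecidableEq α] {H : SimpleGraph α} [DecidableRel H.Adj]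
  {s : Finset α} {v : α}

theorem sdiff_closedNbhdFinset_ssubset (hv : v ∈ s) : s \ H.closedNbhdFinset v ⊂ s :=
  Finset.sdiff_subset.ssubset_of_not_subset fun h =>
    (Finset.mem_sdiff.mp (h hv)).2 (Finset.mem_insert_self v _)

theorem sdiff_closedNbhdFinset_eq_erase (hv : ∀ w ∈ s, ¬ H.Adj v w) :
    s \ H.closedNbhdFinset v = s.erase v := by
  ext w
  by_cases hw : w = v
  · simp [hw, closedNbhdFinset]
  · simp +contextual [closedNbhdFinset, hw, hv w]

theorem VD.of_forall_not_adj {k : ℕ} (hs : ∀ u ∈ s, ∀ w ∈ s, ¬ H.Adj u w) (hk : k ≤ s.card) :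
    H.VD s k := by
  induction s using Finset.strongInduction generalizing k with
  | H s ih =>
  obtain hk | hk := hk.eq_or_lt
  · exact .edgeless s k hk.symm hs
  obtain ⟨v, hv⟩ := Finset.card_pos.mp (k.zero_le.trans_lt hk)
  have hsub : ∀ u ∈ s.erase v, ∀ w ∈ s.erase v, ¬ H.Adj u w := fun u hu w hw =>
    hs u (Finset.mem_of_mem_erase hu) w (Finset.mem_of_mem_erase hw)
  have hcard : (s.erase v).card = s.card - 1 := Finset.card_erase_of_mem hv
  cases k with
  | zero => exact .zero s
  | succ k =>
    refine .step s k v hv (ih _ (Finset.erase_ssubset hv) hsub (by omega)) ?_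
    rw [sdiff_closedNbhdFinset_eq_erase (hs v hv)]
    exact ih _ (Finset.erase_ssubset hv) hsub (by omega)

end SimpleGraph

namespace BoxProdTop

open SimpleGraph Function

variable {V W : Type*} {G : SimpleGraph V} {s d : Finset (V × W)} {u w x : V} {c : W}
  {R k k' : ℕ} {π π' : V → Option W} {τ τ' : V → ℕ}

noncomputable def row (s : Finset (V × W)) (u : V) : Finset W :=
  s.preimage (Prod.mk u) (Prod.mk_right_injective u).injOn

@[simp] theorem mem_row : c ∈ row s u ↔ (u, c) ∈ s := Finset.mem_preimage

section Pins

variable (G) (R : ℕ) (s : Finset (V × W)) (π : V → Option W) (τ : V → ℕ)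

def IsBlocked (u : V) : Prop := ∃ c ∈ π u, (u, c) ∈ s ∧ ∃ x, G.Adj u x ∧ (x, c) ∈ s

def IsActive (u : V) : Prop := (π u = none ∧ 1 ≤ τ u) ∨ IsBlocked G s π u

-- The cap `R` on blocked rows makes the value antitone in `s` (see `rowValue_anti`).
open Classical in
noncomputable def rowValue (u : V) : ℕ :=
  if π u = none then τ u else if IsBlocked G s π u then min (τ u + 1) R else R

end Pins

theorem IsBlocked.mono (h : d ⊆ s) : IsBlocked G d π u → IsBlocked G s π u :=
  fun ⟨c, hc, huc, x, hux, hxc⟩ => ⟨c, hc, h huc, x, hux, h hxc⟩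

theorem isBlocked_congr (h : π' u = π u) : IsBlocked G s π' u ↔ IsBlocked G s π u := by
  simp only [IsBlocked, h]

theorem IsActive.mono (h : d ⊆ s) (hu : IsActive G d π τ u) : IsActive G s π τ u :=
  hu.imp_right (IsBlocked.mono h)

theorem isActive_congr (hπ : π' u = π u) (hτ : τ' u = τ u) :
    IsActive G s π' τ' u ↔ IsActive G s π τ u := by
  rw [IsActive, IsActive, isBlocked_congr hπ, hπ, hτ]

theorem rowValue_congr (hπ : π' u = π u) (hτ : τ' u = τ u) :
    rowValue G R s π' τ' u = rowValue G R s π τ u := by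
  have := isBlocked_congr (G := G) (s := s) hπ
  unfold rowValue; split_ifs <;> simp_all

theorem rowValue_of_none (h : π u = none) : rowValue G R s π τ u = τ u := if_pos h

theorem rowValue_le (h : τ u ≤ R) : rowValue G R s π τ u ≤ R := by
  unfold rowValue; split_ifs <;> omega

theorem rowValue_anti (h : d ⊆ s) : rowValue G R s π τ u ≤ rowValue G R d π τ u := by
  have := mt (IsBlocked.mono (G := G) (π := π) (u := u) h)
  unfold rowValue; split_ifs <;> grind

section Rows

variable [DecidableEq V]

def rows (s : Finset (V × W)) : Finset V := s.image Prod.fst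

theorem mem_rows : u ∈ rows s ↔ ∃ c, (u, c) ∈ s := by simp [rows]

theorem mem_rows_of_mem (h : (u, c) ∈ s) : u ∈ rows s := mem_rows.mpr ⟨c, h⟩

theorem row_nonempty : (row s u).Nonempty ↔ u ∈ rows s := by
  simp [Finset.Nonempty, mem_rows]

theorem rows_mono (h : d ⊆ s) : rows d ⊆ rows s := Finset.image_subset_image h

theorem card_rows_le : (rows s).card ≤ s.card := Finset.card_image_le

theorem IsBlocked.mem_rows : IsBlocked G s π u → u ∈ rows s :=
  fun ⟨_, _, huc, _⟩ => mem_rows_of_mem huc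

def unpinnedRows (s : Finset (V × W)) (π : V → Option W) : Finset V := {u ∈ rows s | π u = none}

theorem card_unpinnedRows_update_lt (hu : u ∈ rows s) (hπ : π u = none) :
    (unpinnedRows s (update π u (some c))).card < (unpinnedRows s π).card := by
  refine Finset.card_lt_card ((Finset.ssubset_iff_of_subset fun v hv => ?_).mpr
    ⟨u, by simp [unpinnedRows, hu, hπ], by simp [unpinnedRows]⟩)
  simp only [unpinnedRows, Finset.mem_filter] at hv ⊢
  obtain rfl | hvu := eq_or_ne v u
  · simp at hv
  · rwa [update_of_ne hvu] at hv

noncomputable def potential (G : SimpleGraph V) (R : ℕ) (s : Finset (V × W)) (π : V → Option W)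
    (τ : V → ℕ) : ℕ :=
  ∑ u ∈ rows s, rowValue G R s π τ u

theorem potential_le_add_sum_sdiff (h : d ⊆ s) :
    potential G R s π τ ≤ potential G R d π τ + ∑ u ∈ rows s \ rows d, rowValue G R s π τ u := by
  rw [potential, potential, ← Finset.sum_sdiff (rows_mono h), add_comm]
  exact Nat.add_le_add_right (Finset.sum_le_sum fun u _ => rowValue_anti h) _

theorem potential_le_of_subset (h : d ⊆ s)
    (hdead : ∀ u ∈ rows s, u ∉ rows d → π u = none ∧ τ u = 0) :
    potential G R s π τ ≤ potential G R d π τ := by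
  refine (potential_le_add_sum_sdiff h).trans_eq ?_
  rw [Finset.sum_eq_zero fun u hu => ?_, add_zero]
  obtain ⟨hπ, hτ⟩ := hdead u (Finset.mem_sdiff.mp hu).1 (Finset.mem_sdiff.mp hu).2
  rw [rowValue_of_none hπ, hτ]

theorem potential_le_add_of_subset (h : d ⊆ s) (hx : τ x ≤ R)
    (hdead : ∀ u ∈ rows s, u ≠ x → u ∉ rows d → π u = none ∧ τ u = 0) :
    potential G R s π τ ≤ potential G R d π τ + R := by
  refine (potential_le_add_sum_sdiff h).trans (Nat.add_le_add_left ?_ _)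
  calc ∑ u ∈ rows s \ rows d, rowValue G R s π τ u
      ≤ ∑ u ∈ rows s \ rows d, if u = x then R else 0 := by
        refine Finset.sum_le_sum fun u hu => ?_
        split_ifs with hux
        · exact hux ▸ rowValue_le hx
        · obtain ⟨hπ, hτ⟩ := hdead u (Finset.mem_sdiff.mp hu).1 hux (Finset.mem_sdiff.mp hu).2
          rw [rowValue_of_none hπ, hτ]
    _ ≤ R := by rw [Finset.sum_ite_eq']; split_ifs <;> simp

theorem potential_le_potential_update_none_add_one (hw : IsBlocked G s π w) :
    potential G R s π τ ≤ potential G R s (update π w none) τ + 1 := by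
  have hw' := hw.mem_rows
  unfold potential
  rw [← Finset.add_sum_erase _ _ hw', ← Finset.add_sum_erase _ _ hw',
    Finset.sum_congr rfl fun u hu =>
      rowValue_congr (update_of_ne (Finset.ne_of_mem_erase hu) ..) rfl,
    rowValue_of_none (update_self ..)]
  have : rowValue G R s π τ w ≤ τ w + 1 := by
    obtain ⟨c, hc, -⟩ := id hw
    rw [rowValue, if_neg (by simp [Option.mem_def.mp hc]), if_pos hw]
    exact min_le_left ..
  omega

open Classical in
noncomputable def weight (s : Finset (V × W)) (π : V → Option W) (τ : V → ℕ) (u x : V) : ℕ :=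
  if x ∈ rows s then 1 + τ x + if ∃ c ∈ π x, (u, c) ∈ s then 1 else 0 else 0

theorem weight_mono (h : d ⊆ s) : weight d π τ u x ≤ weight s π τ u x := by
  have hrows : rows d ⊆ rows s := rows_mono h
  unfold weight; split_ifs <;> grind

theorem weight_pos (hx : x ∈ rows s) : 0 < weight s π τ u x := by
  unfold weight; split_ifs <;> omega

theorem weight_of_notMem_rows (hx : x ∉ rows s) : weight s π τ u x = 0 := if_neg hx

theorem weight_update_none_le : weight s (update π w none) τ u x ≤ weight s π τ u x := by
  unfold weight
  by_cases hxw : x = w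
  · subst hxw; split_ifs <;> simp_all
  · rw [update_of_ne hxw]

theorem weight_update_pin_le (hπ : π w = none) (hτ : 1 ≤ τ w) :
    weight s (update π w (some c)) (update τ w (τ w - 1)) u x ≤ weight s π τ u x := by
  unfold weight
  by_cases hxw : x = w
  · subst hxw; split_ifs <;> simp_all
  · rw [update_of_ne hxw, update_of_ne hxw]

variable [DecidableEq W]

theorem row_erase_self : row (s.erase (x, c)) x = (row s x).erase c := by
  ext; simp

theorem row_erase_of_ne (h : u ≠ x) : row (s.erase (x, c)) u = row s u := by
  ext; simp [h]

theorem mem_rows_erase_of_ne (hux : u ≠ x) (hu : u ∈ rows s) : u ∈ rows (s.erase (x, c)) :=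
  row_nonempty.mp (by rw [row_erase_of_ne hux]; exact row_nonempty.mpr hu)

theorem weight_erase_lt (hw : c ∈ π w) (hws : w ∈ rows (s.erase (x, c))) (hxc : (x, c) ∈ s) :
    weight (s.erase (x, c)) π τ x w < weight s π τ x w := by
  have hbit : ¬ ∃ c' ∈ π w, (x, c') ∈ s.erase (x, c) := by
    rintro ⟨c', hc', hxc'⟩
    simp [Option.mem_unique hc' hw] at hxc'
  rw [weight, weight, if_pos hws, if_pos (rows_mono (s.erase_subset _) hws), if_neg hbit,
    if_pos ⟨c, hw, hxc⟩]
  omega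

end Rows

variable [Fintype V] [DecidableEq V] [DecidableRel G.Adj]

noncomputable def demand (G : SimpleGraph V) [DecidableRel G.Adj] (s : Finset (V × W))
    (π : V → Option W) (τ : V → ℕ) (u : V) : ℕ :=
  ∑ x ∈ G.neighborFinset u, weight s π τ u x

theorem demand_mono (h : d ⊆ s) : demand G d π τ u ≤ demand G s π τ u :=
  Finset.sum_le_sum fun _ _ => weight_mono h

theorem demand_lt_demand_of_weight_lt (h : d ⊆ s) (hux : G.Adj u x)
    (hx : weight d π τ u x < weight s π τ u x) : demand G d π τ u < demand G s π τ u :=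
  Finset.sum_lt_sum (fun _ _ => weight_mono h) ⟨x, (mem_neighborFinset ..).mpr hux, hx⟩

theorem demand_update_none_le : demand G s (update π w none) τ u ≤ demand G s π τ u :=
  Finset.sum_le_sum fun _ _ => weight_update_none_le

theorem one_lt_card_row_of_demand_lt (h : demand G s π τ u < (row s u).card) (hux : G.Adj u x)
    (hx : x ∈ rows s) : 1 < (row s u).card := by
  have : weight s π τ u x ≤ demand G s π τ u :=
    Finset.single_le_sum (fun _ _ => Nat.zero_le _) ((mem_neighborFinset ..).mpr hux)
  have := weight_pos (π := π) (τ := τ) (u := u) hx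
  omega

variable (G) in
structure Invariant (R k : ℕ) (s : Finset (V × W)) (π : V → Option W) (τ : V → ℕ) : Prop where
  potential_ge : (R + 1) * k ≤ potential G R s π τ
  pin_mem : ∀ u ∈ rows s, ∀ c ∈ π u, (u, c) ∈ s
  demand_lt : ∀ u ∈ rows s, IsActive G s π τ u → demand G s π τ u < (row s u).card
  tokens_le : ∀ u, τ u ≤ R
  isBlocked_unique : ∀ u w, IsBlocked G s π u → IsBlocked G s π w → u = w

theorem Invariant.of_subset_of_quiet (h : Invariant G R k s π τ) (hds : d ⊆ s)
    (hquiet : ∀ u ∈ rows s, ¬ IsActive G s π τ u) (hpot : (R + 1) * k' ≤ potential G R d π τ)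
    (hpin : ∀ u ∈ rows d, ∀ c ∈ π u, (u, c) ∈ d) : Invariant G R k' d π τ where
  potential_ge := hpot
  pin_mem := hpin
  demand_lt u hu hact := absurd (hact.mono hds) (hquiet u (rows_mono hds hu))
  tokens_le := h.tokens_le
  isBlocked_unique u _ hu := absurd (Or.inr (hu.mono hds)) (hquiet u (hu.mono hds).mem_rows)

theorem Invariant.pin (h : Invariant G R k s π τ) (hnb : ∀ v, ¬ IsBlocked G s π v)
    (huc : (u, c) ∈ s) (hπ : π u = none) (hτ : 1 ≤ τ u) :
    Invariant G R k s (update π u (some c)) (update τ u (τ u - 1)) := by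
  have hτR := h.tokens_le u
  have hblocked : ∀ v, IsBlocked G s (update π u (some c)) v → v = u := fun v hv =>
    by_contra fun hvu => hnb v ((isBlocked_congr (update_of_ne hvu ..)).mp hv)
  refine ⟨h.potential_ge.trans (Finset.sum_le_sum fun v _ => ?_), fun v hv c' hc' => ?_,
    fun v hv hact => ?_, fun v => ?_,
    fun v v' hv hv' => (hblocked v hv).trans (hblocked v' hv').symm⟩
  · obtain rfl | hvu := eq_or_ne v u
    · rw [rowValue_of_none hπ, rowValue, if_neg (by simp), update_self]
      split_ifs <;> omega
    · rw [rowValue_congr (update_of_ne hvu ..) (update_of_ne hvu ..)]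
  · obtain rfl | hvu := eq_or_ne v u
    · simp_all
    · rw [update_of_ne hvu] at hc'
      exact h.pin_mem v hv c' hc'
  · have hact' : IsActive G s π τ v := by
      obtain rfl | hvu := eq_or_ne v u
      · exact Or.inl ⟨hπ, hτ⟩
      · exact (isActive_congr (update_of_ne hvu ..) (update_of_ne hvu ..)).mp hact
    exact (Finset.sum_le_sum fun x _ => weight_update_pin_le hπ hτ).trans_lt
      (h.demand_lt v hv hact')
  · obtain rfl | hvu := eq_or_ne v u
    · rw [update_self]; omega
    · rw [update_of_ne hvu]; exact h.tokens_le v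

section Erase

variable [DecidableEq W]

theorem Invariant.pin_mem_erase (h : Invariant G R k s π τ) (hc : c ∉ π x) :
    ∀ u ∈ rows s, ∀ c' ∈ π u, (u, c') ∈ s.erase (x, c) := by
  intro u hu c' hc'
  refine Finset.mem_erase.mpr ⟨?_, h.pin_mem u hu c' hc'⟩
  rintro ⟨⟩
  exact hc hc'

theorem Invariant.potential_le_potential_erase (h : Invariant G R k s π τ) (hc : c ∉ π x)
    (hx : π x = none → 1 ≤ τ x → x ∈ rows (s.erase (x, c))) :
    potential G R s π τ ≤ potential G R (s.erase (x, c)) π τ := by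
  refine potential_le_of_subset (s.erase_subset _) fun u hu hdead => ?_
  obtain rfl : u = x := by_contra fun hux => hdead (mem_rows_erase_of_ne hux hu)
  cases hπ : π u with
  | some c' => exact absurd (mem_rows_of_mem (h.pin_mem_erase hc u hu c' hπ)) hdead
  | none => exact ⟨rfl, by by_contra hτ; exact hdead (hx hπ (by omega))⟩

theorem Invariant.erase_of_quiet (h : Invariant G R k s π τ)
    (hquiet : ∀ u ∈ rows s, ¬ IsActive G s π τ u) (hxc : (x, c) ∈ s) (hc : c ∉ π x) :
    Invariant G R k (s.erase (x, c)) π τ :=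
  h.of_subset_of_quiet (s.erase_subset _) hquiet
    (h.potential_ge.trans (h.potential_le_potential_erase hc fun hπ hτ =>
      absurd (Or.inl ⟨hπ, hτ⟩) (hquiet x (mem_rows_of_mem hxc))))
    fun u hu => h.pin_mem_erase hc u (rows_mono (s.erase_subset _) hu)

theorem Invariant.erase_of_isBlocked (h : Invariant G R k s π τ) (hw : c ∈ π w)
    (hwc : (w, c) ∈ s) (hwx : G.Adj w x) (hxc : (x, c) ∈ s) :
    Invariant G R k (s.erase (x, c)) π τ := by
  have hsub : s.erase (x, c) ⊆ s := s.erase_subset _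
  have hxw : x ≠ w := hwx.ne'
  have hws : w ∈ rows (s.erase (x, c)) :=
    mem_rows_of_mem (Finset.mem_erase.mpr ⟨by simp [hxw.symm], hwc⟩)
  -- a pin `c` at `x` would block both `x` and `w`
  have hxpin : c ∉ π x := fun hx =>
    hxw (h.isBlocked_unique x w ⟨c, hx, hxc, w, hwx.symm, hwc⟩ ⟨c, hw, hwc, x, hwx, hxc⟩)
  refine ⟨h.potential_ge.trans (h.potential_le_potential_erase hxpin fun hπ hτ => ?_),
    fun u hu => h.pin_mem_erase hxpin u (rows_mono hsub hu), fun u hu hact => ?_, h.tokens_le,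
    fun u v hu hv => h.isBlocked_unique u v (hu.mono hsub) (hv.mono hsub)⟩
  · have hlt := one_lt_card_row_of_demand_lt
      (h.demand_lt x (mem_rows_of_mem hxc) (Or.inl ⟨hπ, hτ⟩)) hwx.symm (rows_mono hsub hws)
    obtain ⟨c', hc', hc'c⟩ := Finset.exists_mem_ne hlt c
    exact mem_rows_of_mem (Finset.mem_erase.mpr ⟨by simp [hc'c], mem_row.mp hc'⟩)
  · have hdem := h.demand_lt u (rows_mono hsub hu) (hact.mono hsub)
    obtain rfl | hux := eq_or_ne u x
    · have hcard : (row (s.erase (u, c)) u).card + 1 = (row s u).card := by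
        rw [row_erase_self]; exact Finset.card_erase_add_one (mem_row.mpr hxc)
      have := demand_lt_demand_of_weight_lt hsub hwx.symm (weight_erase_lt (τ := τ) hw hws hxc)
      omega
    · rw [row_erase_of_ne hux]
      exact (demand_mono hsub).trans_lt hdem

end Erase

variable [Fintype W] [DecidableEq W]

variable (G) in
theorem mem_closedNbhdFinset_boxProd_top {a : V} {b : W} :
    (a, b) ∈ (G □ (⊤ : SimpleGraph W)).closedNbhdFinset (x, c) ↔ a = x ∨ b = c ∧ G.Adj x a := by
  simp only [closedNbhdFinset, Finset.mem_insert, mem_neighborFinset, boxProd_adj, top_adj,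
    Prod.mk.injEq]
  grind

theorem notMem_rows_sdiff_closedNbhdFinset :
    x ∉ rows (s \ (G □ (⊤ : SimpleGraph W)).closedNbhdFinset (x, c)) := by
  simp [mem_rows, mem_closedNbhdFinset_boxProd_top]

theorem row_sdiff_closedNbhdFinset_of_not_adj (hux : u ≠ x) (h : ¬ G.Adj x u) :
    row (s \ (G □ (⊤ : SimpleGraph W)).closedNbhdFinset (x, c)) u = row s u := by
  ext; simp [mem_closedNbhdFinset_boxProd_top, hux, h]

theorem card_row_le_card_row_sdiff_closedNbhdFinset_add_one (hux : u ≠ x) :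
    (row s u).card ≤ (row (s \ (G □ (⊤ : SimpleGraph W)).closedNbhdFinset (x, c)) u).card + 1 := by
  have hsub : (row s u).erase c ⊆
      row (s \ (G □ (⊤ : SimpleGraph W)).closedNbhdFinset (x, c)) u := by
    intro b; simp +contextual [mem_closedNbhdFinset_boxProd_top, hux]
  have := Finset.card_le_card hsub
  have := Finset.pred_card_le_card_erase (s := row s u) (a := c)
  omega

theorem demand_sdiff_closedNbhdFinset_lt (hx : x ∈ rows s) (hux : u ≠ x)
    (h : demand G s π τ u < (row s u).card) :
    demand G (s \ (G □ (⊤ : SimpleGraph W)).closedNbhdFinset (x, c)) π τ u <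
      (row (s \ (G □ (⊤ : SimpleGraph W)).closedNbhdFinset (x, c)) u).card := by
  set D := s \ (G □ (⊤ : SimpleGraph W)).closedNbhdFinset (x, c)
  by_cases hadj : G.Adj x u
  · have hlt : demand G D π τ u < demand G s π τ u :=
      demand_lt_demand_of_weight_lt Finset.sdiff_subset hadj.symm
        ((weight_of_notMem_rows notMem_rows_sdiff_closedNbhdFinset).trans_lt (weight_pos hx))
    have : (row s u).card ≤ (row D u).card + 1 :=
      card_row_le_card_row_sdiff_closedNbhdFinset_add_one hux
    omega
  · rw [row_sdiff_closedNbhdFinset_of_not_adj hux hadj]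
    exact (demand_mono Finset.sdiff_subset).trans_lt h

theorem Invariant.pin_mem_sdiff_closedNbhdFinset (h : Invariant G R k s π τ) (hxc : (x, c) ∈ s)
    (hu : u ∈ rows s) (hux : u ≠ x) (hnb : ¬ IsBlocked G s π u) {c' : W} (hc' : c' ∈ π u) :
    (u, c') ∈ s \ (G □ (⊤ : SimpleGraph W)).closedNbhdFinset (x, c) := by
  have hpin := h.pin_mem u hu c' hc'
  rw [Finset.mem_sdiff, mem_closedNbhdFinset_boxProd_top]
  refine ⟨hpin, ?_⟩
  rintro (rfl | ⟨rfl, hxu⟩)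
  · exact hux rfl
  · exact hnb ⟨c', hc', hpin, x, hxu.symm, hxc⟩

theorem Invariant.eq_none_and_eq_zero_of_notMem_rows_sdiff (h : Invariant G R k s π τ)
    (hxc : (x, c) ∈ s) (hu : u ∈ rows s) (hux : u ≠ x)
    (hdead : u ∉ rows (s \ (G □ (⊤ : SimpleGraph W)).closedNbhdFinset (x, c))) :
    π u = none ∧ τ u = 0 := by
  have hact : ¬ IsActive G s π τ u := fun hact => hdead <| row_nonempty.mp <| Finset.card_pos.mp <|
    Nat.zero_lt_of_lt (demand_sdiff_closedNbhdFinset_lt (mem_rows_of_mem hxc) hux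
      (h.demand_lt u hu hact))
  cases hπ : π u with
  | some c' =>
    exact absurd (mem_rows_of_mem (h.pin_mem_sdiff_closedNbhdFinset hxc hu hux
      (fun hb => hact (Or.inr hb)) hπ)) hdead
  | none => exact ⟨rfl, by by_contra hτ; exact hact (Or.inl ⟨hπ, by omega⟩)⟩

theorem Invariant.sdiff_of_quiet (h : Invariant G R (k + 1) s π τ)
    (hquiet : ∀ u ∈ rows s, ¬ IsActive G s π τ u) (hxc : (x, c) ∈ s) :
    Invariant G R k (s \ (G □ (⊤ : SimpleGraph W)).closedNbhdFinset (x, c)) π τ := by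
  have hpot := h.potential_ge.trans (potential_le_add_of_subset Finset.sdiff_subset
    (h.tokens_le x) fun u hu hux hdead =>
      h.eq_none_and_eq_zero_of_notMem_rows_sdiff hxc hu hux hdead)
  refine h.of_subset_of_quiet Finset.sdiff_subset hquiet (by linarith) fun u hu c' hc' => ?_
  exact h.pin_mem_sdiff_closedNbhdFinset hxc (rows_mono Finset.sdiff_subset hu)
    (ne_of_mem_of_not_mem hu notMem_rows_sdiff_closedNbhdFinset)
    (fun hb => hquiet u hb.mem_rows (Or.inr hb)) hc'

theorem Invariant.sdiff_of_isBlocked (h : Invariant G R (k + 1) s π τ) (hw : c ∈ π w)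
    (hwc : (w, c) ∈ s) (hwx : G.Adj w x) (hxc : (x, c) ∈ s) :
    Invariant G R k (s \ (G □ (⊤ : SimpleGraph W)).closedNbhdFinset (x, c))
      (update π w none) τ := by
  set D := s \ (G □ (⊤ : SimpleGraph W)).closedNbhdFinset (x, c)
  have hD : D ⊆ s := Finset.sdiff_subset
  have hwb : IsBlocked G s π w := ⟨c, hw, hwc, x, hwx, hxc⟩
  have hnb : ∀ u ≠ w, ¬ IsBlocked G s π u := fun u hu hb => hu (h.isBlocked_unique u w hb hwb)
  have hne : ∀ u ∈ rows D, u ≠ x := fun u hu =>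
    ne_of_mem_of_not_mem hu notMem_rows_sdiff_closedNbhdFinset
  refine ⟨?_, fun u hu c' hc' => ?_, fun u hu hact => ?_, h.tokens_le, fun u _ hu _ => ?_⟩
  · have h₁ := potential_le_potential_update_none_add_one (R := R) (τ := τ) hwb
    have h₂ : potential G R s (update π w none) τ ≤ potential G R D (update π w none) τ + R :=
      potential_le_add_of_subset hD (h.tokens_le x) fun u hu hux hdead => by
        obtain ⟨hπ, hτ⟩ := h.eq_none_and_eq_zero_of_notMem_rows_sdiff hxc hu hux hdead
        refine ⟨?_, hτ⟩
        rw [update_apply]; split_ifs <;> simp [hπ]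
    have := h.potential_ge
    linarith
  · have huw : u ≠ w := by rintro rfl; simp at hc'
    rw [update_of_ne huw] at hc'
    exact h.pin_mem_sdiff_closedNbhdFinset hxc (rows_mono hD hu) (hne u hu) (hnb u huw) hc'
  · have hact' : IsActive G s π τ u := by
      obtain rfl | huw := eq_or_ne u w
      · exact Or.inr hwb
      · exact ((isActive_congr (update_of_ne huw ..) rfl).mp hact).mono hD
    exact demand_update_none_le.trans_lt (demand_sdiff_closedNbhdFinset_lt (mem_rows_of_mem hxc)
      (hne u hu) (h.demand_lt u (rows_mono hD hu) hact'))
  · have huw : u ≠ w := by rintro rfl; obtain ⟨_, hc, -⟩ := hu; simp at hc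
    exact (hnb u huw (((isBlocked_congr (update_of_ne huw ..)).mp hu).mono hD)).elim

theorem Invariant.vd_of_forall_mem_pin (h : Invariant G R k s π τ)
    (hquiet : ∀ u ∈ rows s, ¬ IsActive G s π τ u) (hpin : ∀ v ∈ s, v.2 ∈ π v.1) :
    (G □ (⊤ : SimpleGraph W)).VD s k := by
  refine VD.of_forall_not_adj ?_ ?_
  · rintro ⟨a, b⟩ hab ⟨a', b'⟩ hab' hadj
    rcases boxProd_adj.mp hadj with ⟨hG, rfl : b = b'⟩ | ⟨hbb', rfl : a = a'⟩
    · exact hquiet a (mem_rows_of_mem hab) (Or.inr ⟨b, hpin _ hab, hab, a', hG, hab'⟩)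
    · exact (top_adj ..).mp hbb' (Option.mem_unique (hpin _ hab) (hpin _ hab'))
  · have hval : potential G R s π τ = (rows s).card * R := by
      refine Finset.sum_const_nat fun u hu => ?_
      obtain ⟨c, hc⟩ := mem_rows.mp hu
      rw [rowValue, if_neg (by simp [Option.mem_def.mp (hpin _ hc)]),
        if_neg fun hb => hquiet u hu (Or.inr hb)]
    have := h.potential_ge
    have := card_rows_le (s := s)
    nlinarith

theorem Invariant.vd (h : Invariant G R k s π τ) : (G □ (⊤ : SimpleGraph W)).VD s k := by
  induction s using Finset.strongInduction generalizing k π τ with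
  | H s ihs =>
  induction hn : (unpinnedRows s π).card using Nat.strong_induction_on generalizing k π τ with
  | _ n ihn =>
  cases k with
  | zero => exact .zero s
  | succ k =>
  by_cases hA : ∃ w, IsBlocked G s π w
  · obtain ⟨w, c, hw, hwc, x, hwx, hxc⟩ := hA
    exact .step s k (x, c) hxc
      (ihs _ (Finset.erase_ssubset hxc) (h.erase_of_isBlocked hw hwc hwx hxc))
      (ihs _ (sdiff_closedNbhdFinset_ssubset hxc) (h.sdiff_of_isBlocked hw hwc hwx hxc))
  push Not at hA
  by_cases hB : ∃ u ∈ rows s, IsActive G s π τ u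
  · obtain ⟨u, hu, hact⟩ := hB
    obtain ⟨hπ, hτ⟩ := hact.resolve_right (hA u)
    obtain ⟨c, hc⟩ := row_nonempty.mpr hu
    exact ihn _ (hn ▸ card_unpinnedRows_update_lt hu hπ) (h.pin hA (mem_row.mp hc) hπ hτ) rfl
  push Not at hB
  by_cases hC : ∃ v ∈ s, v.2 ∉ π v.1
  · obtain ⟨⟨x, c⟩, hxc, hc⟩ := hC
    exact .step s k (x, c) hxc
      (ihs _ (Finset.erase_ssubset hxc) (h.erase_of_quiet hB hxc hc))
      (ihs _ (sdiff_closedNbhdFinset_ssubset hxc) (h.sdiff_of_quiet hB hxc))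
  push Not at hC
  exact h.vd_of_forall_mem_pin hB hC

theorem invariant_univ (hW : G.maxDegree * (R + 1) < Fintype.card W)
    (hk : (R + 1) * k ≤ R * Fintype.card V) :
    Invariant G R k (Finset.univ : Finset (V × W)) (fun _ => none) (fun _ => R) := by
  obtain ⟨c₀⟩ := Fintype.card_pos_iff.mp (Nat.zero_lt_of_lt hW)
  have hrows : rows (Finset.univ : Finset (V × W)) = Finset.univ :=
    Finset.eq_univ_of_forall fun u => mem_rows.mpr ⟨c₀, Finset.mem_univ _⟩
  refine ⟨?_, by simp, fun u _ _ => ?_, fun _ => le_rfl, fun u _ ⟨_, hc, _⟩ => by simp at hc⟩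
  · rw [potential, hrows, Finset.sum_const_nat fun u _ => rowValue_of_none rfl, Finset.card_univ]
    linarith
  · have hrow : row (Finset.univ : Finset (V × W)) u = Finset.univ :=
      Finset.eq_univ_of_forall fun c => mem_row.mpr (Finset.mem_univ _)
    have hweight : ∀ x ∈ G.neighborFinset u,
        weight (Finset.univ : Finset (V × W)) (fun _ => none) (fun _ => R) u x ≤ R + 1 := by
      intro x _
      unfold weight
      split_ifs <;> simp_all [add_comm]
    calc demand G Finset.univ (fun _ => none) (fun _ => R) u
        ≤ (G.neighborFinset u).card * (R + 1) := Finset.sum_le_card_nsmul _ _ _ hweight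
      _ ≤ G.maxDegree * (R + 1) := by
        rw [card_neighborFinset_eq_degree]
        exact Nat.mul_le_mul_right _ (G.degree_le_maxDegree u)
      _ < (row Finset.univ u).card := by rwa [hrow, Finset.card_univ]

end BoxProdTop

theorem add_one_mul_le_mul_ceil {ε : ℝ} (hε : 0 < ε) (N : ℕ) :
    (⌈1 / ε⌉₊ + 1) * N ≤ ⌈1 / ε⌉₊ * ⌈(N : ℝ) * (1 + ε)⌉₊ := by
  have hR : 1 ≤ (⌈1 / ε⌉₊ : ℝ) * ε := by
    have := mul_le_mul_of_nonneg_right (Nat.le_ceil (1 / ε)) hε.le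
    rwa [one_div_mul_cancel hε.ne'] at this
  have hM := Nat.le_ceil ((N : ℝ) * (1 + ε))
  have hN : (0 : ℝ) ≤ N := N.cast_nonneg
  have hR0 : (0 : ℝ) ≤ ⌈1 / ε⌉₊ := Nat.cast_nonneg _
  exact_mod_cast (by nlinarith : ((⌈1 / ε⌉₊ : ℝ) + 1) * N ≤ ⌈1 / ε⌉₊ * ⌈(N : ℝ) * (1 + ε)⌉₊)

/-- For every `ε > 0` there are a constant `K > 0` and thresholds `N₀, Δ₀` such that every
graph `G` with `⌈N(1+ε)⌉` vertices (`N ≥ N₀`) and maximal degree `Δ ≥ Δ₀` has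
`G □ K_q` being `VD_N` whenever `q > K·Δ`. -/
theorem vd_boxProd_of_linear_degree (ε : ℝ) (hε : 0 < ε) :
    ∃ K : ℝ, 0 < K ∧ ∃ N₀ Δ₀ : ℕ, ∀ N : ℕ, N₀ ≤ N →
      ∀ (V : Type) [Fintype V] [DecidableEq V] (G : SimpleGraph V) [DecidableRel G.Adj],
        Fintype.card V = ⌈(N : ℝ) * (1 + ε)⌉₊ → Δ₀ ≤ G.maxDegree →
        ∀ q : ℕ, K * (G.maxDegree : ℝ) < (q : ℝ) →
          (G □ (⊤ : SimpleGraph (Fin q))).VD Finset.univ N := by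
  refine ⟨⌈1 / ε⌉₊ + 1, by positivity, 0, 0, fun N _ V _ _ G _ hV _ q hq => ?_⟩
  have hq' : G.maxDegree * (⌈1 / ε⌉₊ + 1) < Fintype.card (Fin q) := by
    rw [Fintype.card_fin]
    exact_mod_cast (by linarith : (G.maxDegree : ℝ) * (⌈1 / ε⌉₊ + 1) < q)
  exact (BoxProdTop.invariant_univ hq' (hV ▸ add_one_mul_le_mul_ceil hε N)).vd
end

section
/- Let G be a finite simple graph that is VD_k for an integer k ≥ 0. Then the (k−1)-skeleton of the independence complex Ind(G), that is, the collection of all independent sets of G with at most k vertices, is a vertex decomposable simplicial complex. -/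
/-- A finite simplicial complex (given as the finite collection of its faces) is *pure*
if all its maximal faces have the same number of elements. -/
def IsPureComplex {V : Type*} [DecidableEq V] (K : Finset (Finset V)) : Prop :=
  ∃ d : ℕ, ∀ σ ∈ K, (∀ τ ∈ K, σ ⊆ τ → τ = σ) → σ.card = d

/-- A finite simplicial complex is *vertex decomposable* if it is pure and either it is
`{∅}` or it has a vertex `v` whose deletion `{σ ∈ K | v ∉ σ}` and link
`{σ ∈ K | v ∉ σ ∧ σ ∪ {v} ∈ K}` are both vertex decomposable. -/
inductive VertexDecomposable {V : Type*} [DecidableEq V] : Finset (Finset V) → Prop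
  | point : VertexDecomposable ({∅} : Finset (Finset V))
  | step (K : Finset (Finset V)) (v : V) (hpure : IsPureComplex K)
      (hdl : VertexDecomposable (K.filter (fun σ => v ∉ σ)))
      (hlk : VertexDecomposable (K.filter (fun σ => v ∉ σ ∧ insert v σ ∈ K))) :
      VertexDecomposable K

section Aux

variable {V : Type*} [Fintype V] [DecidableEq V] (G : SimpleGraph V) [DecidableRel G.Adj]

/-- The `(k-1)`-skeleton of the independence complex of the induced subgraph on `s`. -/
def skelAux (s : Finset V) (k : ℕ) : Finset (Finset V) :=
  s.powerset.filter (fun σ => σ.card ≤ k ∧ ∀ u ∈ σ, ∀ w ∈ σ, ¬ G.Adj u w)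

lemma mem_skelAux {s σ : Finset V} {k : ℕ} :
    σ ∈ skelAux G s k ↔ σ ⊆ s ∧ σ.card ≤ k ∧ ∀ u ∈ σ, ∀ w ∈ σ, ¬ G.Adj u w := by
  simp [skelAux, and_assoc]

/-- Any maximal independent set in a `VD_k` graph has at least `k` vertices. -/
lemma vd_le_card {s : Finset V} {k : ℕ} (h : G.VD s k) :
    ∀ σ ⊆ s, (∀ u ∈ σ, ∀ w ∈ σ, ¬ G.Adj u w) →
      (∀ x ∈ s, x ∉ σ → ∃ u ∈ σ, G.Adj x u) → k ≤ σ.card := by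
  induction h with
  | zero s => exact fun σ _ _ _ => Nat.zero_le _
  | edgeless s k hcard hind =>
      intro σ hσs hσind hmax
      have hsσ : s ⊆ σ := by
        intro x hx
        by_contra hxσ
        obtain ⟨u, hu, hadj⟩ := hmax x hx hxσ
        exact hind x hx u (hσs hu) hadj
      rw [Finset.Subset.antisymm hσs hsσ, hcard]
  | step s k v hv hdel hnbr ihdel ihnbr =>
      intro σ hσs hσind hmax
      by_cases hvσ : v ∈ σ
      · have h1 : σ.erase v ⊆ s \ G.closedNbhdFinset v := by
          intro u hu
          have huv := Finset.ne_of_mem_erase hu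
          have huσ := Finset.mem_of_mem_erase hu
          rw [Finset.mem_sdiff]
          refine ⟨hσs huσ, ?_⟩
          simp only [SimpleGraph.closedNbhdFinset, Finset.mem_insert,
            SimpleGraph.mem_neighborFinset]
          push_neg
          exact ⟨huv, hσind v hvσ u huσ⟩
        have h2 : ∀ u ∈ σ.erase v, ∀ w ∈ σ.erase v, ¬ G.Adj u w := fun u hu w hw =>
          hσind u (Finset.mem_of_mem_erase hu) w (Finset.mem_of_mem_erase hw)
        have h3 : ∀ x ∈ s \ G.closedNbhdFinset v, x ∉ σ.erase v →
            ∃ u ∈ σ.erase v, G.Adj x u := by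
          intro x hx hxσ'
          rw [Finset.mem_sdiff] at hx
          have hxv : x ≠ v := by
            intro hxv
            exact hx.2 (hxv ▸ Finset.mem_insert_self v (G.neighborFinset v))
          have hxσ : x ∉ σ := fun hxσ => hxσ' (Finset.mem_erase.mpr ⟨hxv, hxσ⟩)
          obtain ⟨u, hu, hadj⟩ := hmax x hx.1 hxσ
          have huv : u ≠ v := by
            intro huveq
            exact hx.2 (Finset.mem_insert_of_mem
              ((SimpleGraph.mem_neighborFinset G v x).mpr (huveq ▸ hadj).symm))
          exact ⟨u, Finset.mem_erase.mpr ⟨huv, hu⟩, hadj⟩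
        have hle := ihnbr (σ.erase v) h1 h2 h3
        have hcard := Finset.card_erase_of_mem hvσ
        have hpos : 0 < σ.card := Finset.card_pos.mpr ⟨v, hvσ⟩
        omega
      · refine ihdel σ (Finset.subset_erase.mpr ⟨hσs, hvσ⟩) hσind ?_
        intro x hx hxσ
        exact hmax x (Finset.mem_of_mem_erase hx) hxσ

/-- The skeleton of a `VD_k` graph is pure. -/
lemma pure_skelAux {s : Finset V} {k : ℕ} (h : G.VD s k) :
    IsPureComplex (skelAux G s k) := by
  refine ⟨k, fun σ hσ hmax => ?_⟩
  rw [mem_skelAux] at hσ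
  obtain ⟨hσs, hcard, hind⟩ := hσ
  rcases eq_or_lt_of_le hcard with heq | hlt
  · exact heq
  refine absurd (vd_le_card G h σ hσs hind ?_) (by omega)
  intro x hx hxσ
  by_contra hne
  push_neg at hne
  have hiind : ∀ u ∈ insert x σ, ∀ w ∈ insert x σ, ¬ G.Adj u w := by
    intro u hu w hw hadj
    rcases Finset.mem_insert.mp hu with h1 | h1 <;>
      rcases Finset.mem_insert.mp hw with h2 | h2
    · rw [h1, h2] at hadj; exact G.irrefl hadj
    · rw [h1] at hadj; exact hne w h2 hadj
    · rw [h2] at hadj; exact hne u h1 hadj.symm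
    · exact hind u h1 w h2 hadj
  have hins : insert x σ ∈ skelAux G s k := by
    rw [mem_skelAux]
    refine ⟨Finset.insert_subset hx hσs, ?_, hiind⟩
    rw [Finset.card_insert_of_notMem hxσ]
    omega
  have := hmax (insert x σ) hins (Finset.subset_insert x σ)
  exact hxσ (this ▸ Finset.mem_insert_self x σ)

/-- A full simplex (powerset) is vertex decomposable. -/
lemma vd_powerset (s : Finset V) : VertexDecomposable (s.powerset : Finset (Finset V)) := by
  induction s using Finset.strongInduction with
  | _ s ih =>
    rcases Finset.eq_empty_or_nonempty s with rfl | ⟨v, hv⟩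
    · rw [Finset.powerset_empty]
      exact VertexDecomposable.point
    · have herase : s.erase v ⊂ s := Finset.erase_ssubset hv
      have hdl : s.powerset.filter (fun σ => v ∉ σ) = (s.erase v).powerset := by
        ext σ
        simp only [Finset.mem_filter, Finset.mem_powerset, Finset.subset_erase]
      have hlk : s.powerset.filter (fun σ => v ∉ σ ∧ insert v σ ∈ s.powerset)
          = (s.erase v).powerset := by
        ext σ
        simp only [Finset.mem_filter, Finset.mem_powerset, Finset.subset_erase,
          Finset.insert_subset_iff]
        constructor
        · rintro ⟨h1, h2, _⟩; exact ⟨h1, h2⟩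
        · rintro ⟨h1, h2⟩; exact ⟨h1, h2, hv, h1⟩
      refine VertexDecomposable.step _ v ⟨s.card, fun σ hσ hmax => ?_⟩ ?_ ?_
      · have := hmax s (Finset.mem_powerset.mpr (Finset.Subset.refl s))
          (Finset.mem_powerset.mp hσ)
        exact (congrArg Finset.card this).symm
      · rw [hdl]; exact ih _ herase
      · rw [hlk]; exact ih _ herase

lemma skelAux_zero (s : Finset V) : skelAux G s 0 = {∅} := by
  ext σ
  simp only [mem_skelAux, Finset.mem_singleton, Nat.le_zero, Finset.card_eq_zero]
  constructor
  · tauto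
  · rintro rfl
    simp

lemma skelAux_edgeless {s : Finset V} {k : ℕ} (hcard : s.card = k)
    (hind : ∀ u ∈ s, ∀ w ∈ s, ¬ G.Adj u w) : skelAux G s k = s.powerset := by
  ext σ
  rw [mem_skelAux, Finset.mem_powerset]
  constructor
  · exact fun h => h.1
  · intro h
    exact ⟨h, hcard ▸ Finset.card_le_card h, fun u hu w hw => hind u (h hu) w (h hw)⟩

lemma vd_skelAux {s : Finset V} {k : ℕ} (h : G.VD s k) :
    VertexDecomposable (skelAux G s k) := by
  induction h with
  | zero s =>
      rw [skelAux_zero]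
      exact VertexDecomposable.point
  | edgeless s k hcard hind =>
      rw [skelAux_edgeless G hcard hind]
      exact vd_powerset s
  | step s k v hv hdel hnbr ihdel ihnbr =>
      have hA : (skelAux G s (k + 1)).filter (fun σ => v ∉ σ)
          = skelAux G (s.erase v) (k + 1) := by
        ext σ
        simp only [Finset.mem_filter, mem_skelAux, Finset.subset_erase]
        tauto
      have hB : (skelAux G s (k + 1)).filter
            (fun σ => v ∉ σ ∧ insert v σ ∈ skelAux G s (k + 1))
          = skelAux G (s \ G.closedNbhdFinset v) k := by
        ext σ
        simp only [Finset.mem_filter, mem_skelAux]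
        constructor
        · rintro ⟨⟨hσs, hσcard, hind⟩, hvσ, hins, hicard, hiind⟩
          refine ⟨?_, ?_, hind⟩
          · intro x hxσ
            rw [Finset.mem_sdiff]
            refine ⟨hσs hxσ, ?_⟩
            simp only [SimpleGraph.closedNbhdFinset, Finset.mem_insert,
              SimpleGraph.mem_neighborFinset]
            push_neg
            refine ⟨fun hxv => hvσ (hxv ▸ hxσ), ?_⟩
            exact hiind v (Finset.mem_insert_self v σ) x (Finset.mem_insert_of_mem hxσ)
          · have := Finset.card_insert_of_notMem hvσ
            omega
        · rintro ⟨hsub, hσcard, hind⟩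
          have hσs : σ ⊆ s := fun x hx => (Finset.mem_sdiff.mp (hsub hx)).1
          have hvσ : v ∉ σ := fun hx =>
            (Finset.mem_sdiff.mp (hsub hx)).2 (Finset.mem_insert_self _ _)
          have hnotadj : ∀ x ∈ σ, ¬ G.Adj v x := by
            intro x hx hadj
            exact (Finset.mem_sdiff.mp (hsub hx)).2 (Finset.mem_insert_of_mem
              ((SimpleGraph.mem_neighborFinset G v x).mpr hadj))
          have hiind : ∀ u ∈ insert v σ, ∀ w ∈ insert v σ, ¬ G.Adj u w := by
            intro u hu w hw hadj
            rcases Finset.mem_insert.mp hu with h1 | h1 <;>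
              rcases Finset.mem_insert.mp hw with h2 | h2
            · rw [h1, h2] at hadj; exact G.irrefl hadj
            · rw [h1] at hadj; exact hnotadj w h2 hadj
            · rw [h2] at hadj; exact hnotadj u h1 hadj.symm
            · exact hind u h1 w h2 hadj
          refine ⟨⟨hσs, by omega, hind⟩, hvσ, Finset.insert_subset hv hσs, ?_, hiind⟩
          rw [Finset.card_insert_of_notMem hvσ]
          omega
      refine VertexDecomposable.step _ v
        (pure_skelAux G (SimpleGraph.VD.step s k v hv hdel hnbr)) ?_ ?_
      · rw [hA]; exact ihdel
      · rw [hB]; exact ihnbr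

end Aux

/-- If `G` is `VD_k`, then the `(k-1)`-skeleton of the independence complex of `G`,
i.e. the collection of independent sets with at most `k` vertices, is vertex decomposable. -/
theorem skeleton_vertexDecomposable_of_vd {V : Type*} [Fintype V] [DecidableEq V]
    (G : SimpleGraph V) [DecidableRel G.Adj] (k : ℕ) (h : G.VD Finset.univ k) :
    VertexDecomposable ((Finset.univ : Finset V).powerset.filter
      (fun s => s.card ≤ k ∧ ∀ u ∈ s, ∀ w ∈ s, ¬ G.Adj u w)) :=
  vd_skelAux G h
end
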